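/- arXiv:2401.06353 — 8 statements merged into one kernel-verified Lean document; each statement's English description precedes it below -/
import Mathlib

section
/- Let M be an atomic additive submonoid of the rationals ℚ that is not a group. Then M does not simultaneously contain a positive and a negative rational number. -/
/-!
Two rationals of opposite signs are commensurable: for `a > 0 > b` there are `m, n ≥ 1` with
`m • a + n • b = 0`, so `-a = (m - 1) • a + n • b` and likewise `-b` lie in any submonoid
containing `a` and `b`. Hence a submonoid of `ℚ` with elements of both signs contains the
negative of every element, i.e. it is a group.
-/

/-- An element `x` is a unit in the additive submonoid `M` if both `x` and `-x` lie in `M`. -/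
def AddIsUnitIn {G : Type*} [AddCommGroup G] (M : AddSubmonoid G) (x : G) : Prop :=
  x ∈ M ∧ -x ∈ M

/-- `a` is an atom of `M`: a non-unit element of `M` that is not a sum of two non-units of `M`. -/
def AddIsAtomIn {G : Type*} [AddCommGroup G] (M : AddSubmonoid G) (a : G) : Prop :=
  a ∈ M ∧ ¬ AddIsUnitIn M a ∧
    ∀ b c : G, b ∈ M → c ∈ M → a = b + c → AddIsUnitIn M b ∨ AddIsUnitIn M c

/-- `M` is atomic: every non-unit element of `M` is a finite sum of atoms of `M`. -/
def AddIsAtomicIn {G : Type*} [AddCommGroup G] (M : AddSubmonoid G) : Prop :=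
  ∀ x ∈ M, ¬ AddIsUnitIn M x →
    ∃ s : Multiset G, (∀ a ∈ s, AddIsAtomIn M a) ∧ s.sum = x

theorem AddSubmonoid.neg_mem_of_nsmul_add_nsmul_eq_zero {G : Type*} [AddCommGroup G]
    (M : AddSubmonoid G) {a b : G} (ha : a ∈ M) (hb : b ∈ M) {m n : ℕ} (hm : m ≠ 0)
    (h : m • a + n • b = 0) : -a ∈ M := by
  obtain ⟨k, rfl⟩ := Nat.exists_eq_succ_of_ne_zero hm
  have hneg : k • a + n • b = -a := eq_neg_of_add_eq_zero_left <| by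
    rw [← h, Nat.succ_eq_add_one, succ_nsmul]; abel
  exact hneg ▸ M.add_mem (M.nsmul_mem ha k) (M.nsmul_mem hb n)

theorem Rat.exists_nsmul_add_nsmul_eq_zero {a b : ℚ} (ha : 0 < a) (hb : b < 0) :
    ∃ m n : ℕ, m ≠ 0 ∧ n ≠ 0 ∧ m • a + n • b = 0 := by
  have ha' : 0 < a.num := Rat.num_pos.2 ha
  have hb' : b.num < 0 := Rat.num_neg.2 hb
  refine ⟨a.den * b.num.natAbs, b.den * a.num.natAbs,
    mul_ne_zero a.den_ne_zero (Int.natAbs_ne_zero.2 hb'.ne),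
    mul_ne_zero b.den_ne_zero (Int.natAbs_ne_zero.2 ha'.ne'), ?_⟩
  simp only [nsmul_eq_mul, Nat.cast_mul, Nat.cast_natAbs, abs_of_pos ha', abs_of_neg hb',
    Int.cast_neg]
  linear_combination (-(b.num : ℚ)) * a.den_mul_eq_num + a.num * b.den_mul_eq_num

theorem AddSubmonoid.neg_mem_of_pos_of_neg (M : AddSubmonoid ℚ) {a b : ℚ} (ha : a ∈ M)
    (hb : b ∈ M) (ha0 : 0 < a) (hb0 : b < 0) : -a ∈ M ∧ -b ∈ M := by
  obtain ⟨m, n, hm, hn, h⟩ := Rat.exists_nsmul_add_nsmul_eq_zero ha0 hb0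
  exact ⟨M.neg_mem_of_nsmul_add_nsmul_eq_zero ha hb hm h,
    M.neg_mem_of_nsmul_add_nsmul_eq_zero hb ha hn (by rwa [add_comm])⟩

theorem atomic_submonoid_of_rat_not_mixed_signs_general (M : AddSubmonoid ℚ)
    (hnotgroup : ∃ x ∈ M, -x ∉ M) :
    ¬ ((∃ q ∈ M, (0 : ℚ) < q) ∧ (∃ r ∈ M, r < 0)) := by
  rintro ⟨⟨q, hq, hq0⟩, r, hr, hr0⟩
  obtain ⟨x, hx, hnx⟩ := hnotgroup
  rcases lt_trichotomy x 0 with hx0 | rfl | hx0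
  · exact hnx (M.neg_mem_of_pos_of_neg hq hx hq0 hx0).2
  · exact hnx (neg_zero (G := ℚ) ▸ M.zero_mem)
  · exact hnx (M.neg_mem_of_pos_of_neg hx hr hx0 hr0).1

/-- An atomic additive submonoid of `ℚ` which is not a group cannot contain simultaneously
a positive and a negative rational number. -/
theorem atomic_submonoid_of_rat_not_mixed_signs (M : AddSubmonoid ℚ)
    (hatomic : AddIsAtomicIn M) (hnotgroup : ∃ x ∈ M, -x ∉ M) :
    ¬ ((∃ q ∈ M, (0 : ℚ) < q) ∧ (∃ r ∈ M, r < 0)) :=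
  atomic_submonoid_of_rat_not_mixed_signs_general M hnotgroup
end

section
/- Let M be an atomic additive submonoid of ℚ_{≥0} that is not of the form s·ℕ₀ for any positive rational s. Then M contains no strong atoms. -/
/-- `a` is a strong atom of `M`: an atom all of whose multiples `n • a` factor uniquely
into atoms of `M` (namely as `n` copies of `a`). -/
def AddIsStrongAtomIn {G : Type*} [AddCommGroup G] (M : AddSubmonoid G) (a : G) : Prop :=
  AddIsAtomIn M a ∧ ∀ n : ℕ, 0 < n → ∀ s : Multiset G,
    (∀ b ∈ s, AddIsAtomIn M b) → s.sum = n • a → s = Multiset.replicate n a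

/-!
In a submonoid of `ℚ≥0` the only unit is `0`, and any two positive elements are commensurable:
`p • b = q • a` with `p, q > 0`. If `a` is a strong atom and `b` any atom, then `p` copies of `b`
factor `q • a`, so `b = a`. Thus `a` is the only atom, and atomicity forces `M = ℕ • a`.
-/

section

variable {G : Type*} [AddCommGroup G] {M : AddSubmonoid G}

theorem addIsUnitIn_zero (M : AddSubmonoid G) : AddIsUnitIn M 0 :=
  ⟨M.zero_mem, by simp⟩

theorem AddIsUnitIn.eq_zero [PartialOrder G] [IsOrderedAddMonoid G] (hM : ∀ x ∈ M, 0 ≤ x)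
    {x : G} (hx : AddIsUnitIn M x) : x = 0 :=
  le_antisymm (neg_nonneg.mp (hM _ hx.2)) (hM _ hx.1)

theorem AddIsAtomIn.pos [PartialOrder G] (hM : ∀ x ∈ M, 0 ≤ x) {a : G}
    (ha : AddIsAtomIn M a) : 0 < a :=
  (hM a ha.1).lt_of_ne fun h => ha.2.1 (h ▸ addIsUnitIn_zero M)

theorem AddIsStrongAtomIn.eq_of_nsmul_eq_nsmul {a b : G} (ha : AddIsStrongAtomIn M a)
    (hb : AddIsAtomIn M b) {p q : ℕ} (hp : p ≠ 0) (hq : 0 < q) (h : p • b = q • a) :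
    b = a := by
  have hrep : Multiset.replicate p b = Multiset.replicate q a :=
    ha.2 q hq _ (fun c hc => Multiset.eq_of_mem_replicate hc ▸ hb)
      (by rw [Multiset.sum_replicate, h])
  exact Multiset.eq_of_mem_replicate (hrep ▸ Multiset.mem_replicate.mpr ⟨hp, rfl⟩)

theorem AddIsAtomicIn.coe_eq_setOf_nsmul (hM : AddIsAtomicIn M)
    (hred : ∀ x, AddIsUnitIn M x → x = 0) {a : G} (ha : a ∈ M)
    (hatoms : ∀ b, AddIsAtomIn M b → b = a) :
    (M : Set G) = {x | ∃ n : ℕ, x = n • a} := by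
  ext x
  refine ⟨fun hx => ?_, fun ⟨n, hn⟩ => hn ▸ M.nsmul_mem ha n⟩
  by_cases hu : AddIsUnitIn M x
  · exact ⟨0, by rw [hred x hu, zero_smul]⟩
  obtain ⟨s, hs, rfl⟩ := hM x hx hu
  have hs_rep : s = Multiset.replicate (Multiset.card s) a :=
    Multiset.eq_replicate_card.mpr fun c hc => hatoms c (hs c hc)
  exact ⟨Multiset.card s, by rw [hs_rep, Multiset.sum_replicate, Multiset.card_replicate]⟩

end

theorem Rat.exists_natCast_eq_mul_den_of_pos {a : ℚ} (ha : 0 < a) :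
    ∃ m : ℕ, m ≠ 0 ∧ (m : ℚ) = a * a.den := by
  have hnum : 0 < a.num := Rat.num_pos.mpr ha
  refine ⟨a.num.toNat, by omega, ?_⟩
  rw [Rat.mul_den_eq_num]
  exact_mod_cast Int.toNat_of_nonneg hnum.le

theorem Rat.exists_nsmul_eq_nsmul_of_pos {a b : ℚ} (ha : 0 < a) (hb : 0 < b) :
    ∃ p q : ℕ, p ≠ 0 ∧ 0 < q ∧ p • b = q • a := by
  obtain ⟨m, hm, hma⟩ := Rat.exists_natCast_eq_mul_den_of_pos ha
  obtain ⟨n, hn, hnb⟩ := Rat.exists_natCast_eq_mul_den_of_pos hb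
  refine ⟨b.den * m, a.den * n, by positivity, by positivity, ?_⟩
  simp only [nsmul_eq_mul, Nat.cast_mul, hma, hnb]
  ring

/-- An atomic additive submonoid of the nonnegative rationals that is not of the form
`s·ℕ₀` for any positive rational `s` contains no strong atoms. -/
theorem no_strong_atoms_of_atomic_submonoid_of_nonneg_rat (M : AddSubmonoid ℚ)
    (hnonneg : ∀ x ∈ M, (0 : ℚ) ≤ x) (hatomic : AddIsAtomicIn M)
    (hns : ∀ s : ℚ, 0 < s → (M : Set ℚ) ≠ {x : ℚ | ∃ n : ℕ, x = n • s}) :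
    ∀ a : ℚ, ¬ AddIsStrongAtomIn M a := by
  intro a ha
  have hapos : 0 < a := ha.1.pos hnonneg
  have hatoms (b : ℚ) (hb : AddIsAtomIn M b) : b = a := by
    obtain ⟨p, q, hp, hq, h⟩ := Rat.exists_nsmul_eq_nsmul_of_pos hapos (hb.pos hnonneg)
    exact ha.eq_of_nsmul_eq_nsmul hb hp hq h
  exact hns a hapos
    (hatomic.coe_eq_setOf_nsmul (fun _ => AddIsUnitIn.eq_zero hnonneg) ha.1.1 hatoms)
end

section
/- Let M be the additive submonoid of ℤ³ generated by A = {(1,1,1),(1,-1,1),(-1,1,1),(-1,-1,1)}. Then M is atomic with set of atoms equal to A, every element of A is a strong atom of M, and M has no prime elements. -/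
/-- `p` is a prime element of `M`: a non-unit of `M` such that whenever `p` divides
`b + c` in `M`, it divides `b` or `c` in `M`. -/
def AddIsPrimeIn {G : Type*} [AddCommGroup G] (M : AddSubmonoid G) (p : G) : Prop :=
  p ∈ M ∧ ¬ AddIsUnitIn M p ∧
    ∀ b c : G, b ∈ M → c ∈ M → (∃ d ∈ M, b + c = p + d) →
      (∃ d ∈ M, b = p + d) ∨ (∃ d ∈ M, c = p + d)

/-!
Grade by the third coordinate `height`, which is `1` on every generator. Then `0` is the only unit,
an element of height `n` is a sum of exactly `n` generators, and so the atoms are exactly the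
generators. A generator `a` is a strong atom because it is exposed: the functional
`x ↦ a₁ x₁ + a₂ x₂` is maximal on the generators exactly at `a`, so a sum of `n` generators equal
to `n • a` can only use `a`. There are no primes because the generators come in two antipodal pairs
with the same sum `z = (0, 0, 2)`: if `p` has height `n`, then `p ∣ n • z = n • g + n • (z - g)` for
every generator `g`, and comparing heights forces `p = n • g` or `p = n • (z - g)`, which cannot
hold for both pairs.
-/

open AddSubmonoid

section Graded

variable {G : Type*} [AddCommGroup G] {A : Set G} (φ : G →+ ℤ)

theorem map_multiset_sum_eq_card {s : Multiset G} (hs : ∀ a ∈ s, φ a = 1) :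
    φ s.sum = s.card := by
  rw [map_multiset_sum, Multiset.map_congr rfl hs, Multiset.map_const', Multiset.sum_replicate,
    nsmul_one]

theorem exists_multiset_sum_eq_of_mem_closure (hφ : ∀ a ∈ A, φ a = 1) {x : G}
    (hx : x ∈ closure A) : ∃ s : Multiset G, (∀ a ∈ s, a ∈ A) ∧ s.sum = x ∧ φ x = s.card := by
  obtain ⟨s, hsA, rfl⟩ := exists_multiset_of_mem_closure hx
  exact ⟨s, hsA, rfl, map_multiset_sum_eq_card φ fun a ha => hφ a (hsA a ha)⟩

theorem eq_zero_of_mem_closure_of_map_nonpos (hφ : ∀ a ∈ A, φ a = 1) {x : G}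
    (hx : x ∈ closure A) (h : φ x ≤ 0) : x = 0 := by
  obtain ⟨s, -, rfl, hcard⟩ := exists_multiset_sum_eq_of_mem_closure φ hφ hx
  rw [Multiset.card_eq_zero.1 (by omega : s.card = 0), Multiset.sum_zero]

theorem map_nonneg_of_mem_closure (hφ : ∀ a ∈ A, φ a = 1) {x : G} (hx : x ∈ closure A) :
    0 ≤ φ x := by
  obtain ⟨s, -, -, hcard⟩ := exists_multiset_sum_eq_of_mem_closure φ hφ hx
  omega

theorem addIsUnitIn_closure_iff (hφ : ∀ a ∈ A, φ a = 1) {x : G} :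
    AddIsUnitIn (closure A) x ↔ x = 0 := by
  refine ⟨fun ⟨hx, hnx⟩ => eq_zero_of_mem_closure_of_map_nonpos φ hφ hx ?_, ?_⟩
  · simpa using map_nonneg_of_mem_closure φ hφ hnx
  · rintro rfl
    exact ⟨zero_mem _, by simp⟩

theorem addIsAtomIn_closure_of_mem (hφ : ∀ a ∈ A, φ a = 1) {a : G} (ha : a ∈ A) :
    AddIsAtomIn (closure A) a := by
  refine ⟨subset_closure ha, ?_, fun b c hb hc habc => ?_⟩
  · rw [addIsUnitIn_closure_iff φ hφ]
    rintro rfl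
    simpa using hφ 0 ha
  · simp only [addIsUnitIn_closure_iff φ hφ]
    have : φ b + φ c = 1 := by rw [← map_add, ← habc, hφ a ha]
    rcases le_or_gt (φ b) 0 with hb0 | hb0
    · exact .inl (eq_zero_of_mem_closure_of_map_nonpos φ hφ hb hb0)
    · exact .inr (eq_zero_of_mem_closure_of_map_nonpos φ hφ hc (by omega))

theorem mem_of_addIsAtomIn_closure (hφ : ∀ a ∈ A, φ a = 1) {x : G}
    (hx : AddIsAtomIn (closure A) x) : x ∈ A := by
  obtain ⟨hxA, hxu, hsplit⟩ := hx
  obtain ⟨s, hsA, rfl, -⟩ := exists_multiset_sum_eq_of_mem_closure φ hφ hxA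
  induction s using Multiset.induction_on with
  | empty => exact absurd ((addIsUnitIn_closure_iff φ hφ).2 Multiset.sum_zero) hxu
  | cons a t _ =>
    have haA := hsA a (Multiset.mem_cons_self a t)
    have htA : ∀ b ∈ t, b ∈ A := fun b hb => hsA b (Multiset.mem_cons_of_mem hb)
    rw [Multiset.sum_cons] at hsplit ⊢
    simp only [addIsUnitIn_closure_iff φ hφ] at hsplit
    rcases hsplit a t.sum (subset_closure haA) (multiset_sum_mem _ _ fun b hb =>
      subset_closure (htA b hb)) rfl with ha0 | ht0
    · simpa [ha0] using hφ a haA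
    · rwa [ht0, add_zero]

theorem setOf_addIsAtomIn_closure (hφ : ∀ a ∈ A, φ a = 1) :
    {a : G | AddIsAtomIn (closure A) a} = A :=
  Set.ext fun _ => ⟨mem_of_addIsAtomIn_closure φ hφ, addIsAtomIn_closure_of_mem φ hφ⟩

theorem addIsAtomicIn_closure (hφ : ∀ a ∈ A, φ a = 1) : AddIsAtomicIn (closure A) := by
  intro x hx _
  obtain ⟨s, hsA, hsum⟩ := exists_multiset_of_mem_closure hx
  exact ⟨s, fun a ha => addIsAtomIn_closure_of_mem φ hφ (hsA a ha), hsum⟩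

theorem addIsStrongAtomIn_closure_of_exposed (hφ : ∀ a ∈ A, φ a = 1) (ψ : G →+ ℤ) {a : G}
    (ha : a ∈ A) (hψ : ∀ b ∈ A, b ≠ a → ψ b < ψ a) : AddIsStrongAtomIn (closure A) a := by
  refine ⟨addIsAtomIn_closure_of_mem φ hφ ha, fun n _ s hs hsum => ?_⟩
  have hsA : ∀ b ∈ s, b ∈ A := fun b hb => mem_of_addIsAtomIn_closure φ hφ (hs b hb)
  have hcard : s.card = n := by
    have := map_multiset_sum_eq_card φ fun b hb => hφ b (hsA b hb)
    rw [hsum, map_nsmul, hφ a ha, nsmul_one] at this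
    exact_mod_cast this.symm
  refine Multiset.eq_replicate.2 ⟨hcard, fun b hb => ?_⟩
  by_contra hba
  have hlt := Multiset.sum_lt_sum (s := s) (f := ψ) (g := fun _ => ψ a)
    (fun b hb => (eq_or_ne b a).elim (fun h => h ▸ le_rfl) fun h => (hψ b (hsA b hb) h).le)
    ⟨b, hb, hψ b (hsA b hb) hba⟩
  rw [← map_multiset_sum, hsum, Multiset.map_const', Multiset.sum_replicate, hcard,
    map_nsmul] at hlt
  exact lt_irrefl _ hlt

theorem nsmul_sub_sum_mem_closure {z : G} (hz : ∀ a ∈ A, z - a ∈ A) {s : Multiset G}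
    (hs : ∀ a ∈ s, a ∈ A) : s.card • z - s.sum ∈ closure A := by
  rw [← Multiset.sum_replicate, ← Multiset.map_const', ← Multiset.map_id' s, Multiset.map_map,
    ← Multiset.sum_map_sub]
  exact multiset_sum_mem _ _ fun x hx => by
    obtain ⟨a, ha, rfl⟩ := Multiset.mem_map.1 hx
    exact subset_closure (hz a (hs a ha))

theorem not_addIsPrimeIn_closure [IsAddTorsionFree G] (hφ : ∀ a ∈ A, φ a = 1) {z : G}
    (hz : ∀ a ∈ A, z - a ∈ A) {g h : G} (hg : g ∈ A) (hh : h ∈ A) (hgh : g ≠ h)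
    (hghz : g + h ≠ z) (p : G) : ¬ AddIsPrimeIn (closure A) p := by
  rintro ⟨hp, hpu, hprime⟩
  obtain ⟨s, hsA, rfl, hφp⟩ := exists_multiset_sum_eq_of_mem_closure φ hφ hp
  have hn : s.card ≠ 0 := fun h0 => hpu <| (addIsUnitIn_closure_iff φ hφ).2 <| by
    rw [Multiset.card_eq_zero.1 h0, Multiset.sum_zero]
  have key : ∀ a ∈ A, s.sum = s.card • a ∨ s.sum = s.card • (z - a) := by
    intro a ha
    have hdvd : ∃ d ∈ closure A, s.card • a + s.card • (z - a) = s.sum + d :=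
      ⟨_, nsmul_sub_sum_mem_closure hz hsA, by rw [← nsmul_add, add_sub_cancel, add_sub_cancel]⟩
    have eq_of_dvd : ∀ b ∈ A, (∃ d ∈ closure A, s.card • b = s.sum + d) → s.sum = s.card • b := by
      rintro b hb ⟨d, hd, hbd⟩
      have : φ d = 0 := by
        have := congrArg φ hbd
        rw [map_nsmul, hφ b hb, nsmul_one, map_add, hφp] at this
        omega
      rw [hbd, eq_zero_of_mem_closure_of_map_nonpos φ hφ hd this.le, add_zero]
    exact (hprime _ _ (nsmul_mem (subset_closure ha) _) (nsmul_mem (subset_closure (hz a ha)) _)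
      hdvd).imp (eq_of_dvd a ha) (eq_of_dvd _ (hz a ha))
  rcases key g hg with hpg | hpg <;> rcases key h hh with hph | hph <;>
    rw [hpg, nsmul_right_inj hn] at hph
  · exact hgh hph
  · exact hghz (by rw [hph]; abel)
  · exact hghz (by rw [← hph]; abel)
  · exact hgh (sub_right_injective hph)

end Graded

def height : ℤ × ℤ × ℤ →+ ℤ where
  toFun x := x.2.2
  map_zero' := rfl
  map_add' _ _ := rfl

def tilt (a : ℤ × ℤ × ℤ) : ℤ × ℤ × ℤ →+ ℤ where
  toFun x := a.1 * x.1 + a.2.1 * x.2.1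
  map_zero' := by simp
  map_add' x y := by simp only [Prod.fst_add, Prod.snd_add]; ring

/-- The additive submonoid of `ℤ³` generated by `{(±1,±1,1)}` is atomic, its atoms are exactly
these four generators, each of which is a strong atom, and it has no prime elements. -/
theorem rank_three_monoid_strong_atoms_no_primes
    (A : Set (ℤ × ℤ × ℤ))
    (hA : A = {(1, 1, 1), (1, -1, 1), (-1, 1, 1), (-1, -1, 1)})
    (M : AddSubmonoid (ℤ × ℤ × ℤ)) (hM : M = AddSubmonoid.closure A) :
    AddIsAtomicIn M ∧
    {a : ℤ × ℤ × ℤ | AddIsAtomIn M a} = A ∧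
    (∀ a ∈ A, AddIsStrongAtomIn M a) ∧
    (∀ p : ℤ × ℤ × ℤ, ¬ AddIsPrimeIn M p) := by
  subst hM
  have hheight : ∀ a ∈ A, height a = 1 := by
    rw [hA]; rintro a (rfl | rfl | rfl | rfl) <;> rfl
  have hexposed : ∀ a ∈ A, ∀ b ∈ A, b ≠ a → tilt a b < tilt a a := by
    rw [hA]
    rintro a (rfl | rfl | rfl | rfl) b (rfl | rfl | rfl | rfl) <;> simp [tilt]
  have hantipodal : ∀ a ∈ A, ((0, 0, 2) : ℤ × ℤ × ℤ) - a ∈ A := by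
    rw [hA]; rintro a (rfl | rfl | rfl | rfl) <;> decide
  have hg : ((1, 1, 1) : ℤ × ℤ × ℤ) ∈ A := by rw [hA]; decide
  have hh : ((1, -1, 1) : ℤ × ℤ × ℤ) ∈ A := by rw [hA]; decide
  exact ⟨addIsAtomicIn_closure height hheight, setOf_addIsAtomIn_closure height hheight,
    fun a ha => addIsStrongAtomIn_closure_of_exposed height hheight (tilt a) ha (hexposed a ha),
    not_addIsPrimeIn_closure height hheight hantipodal hg hh (by decide) (by decide)⟩
end

section
/- Let M be the additive submonoid of ℤ² generated by a₀ = (0,2), a₁ = (1,1), a₂ = (2,0). Then the set of atoms of M is {a₀,a₁,a₂}, the set of strong atoms of M is {a₀,a₂}, and M has no primes. -/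
/-!
The monoid is the set of lattice points `(x, y)` of the closed first quadrant with `x + y`
even. It lies in the positive cone of `ℤ²`, so its only unit is `0`, divisibility implies the
componentwise order, and `x + y` is an additive grading in which the atoms are exactly the
elements of degree `2`. The generator `(2, 0)` is a strong atom because every atom below a
multiple of it has second coordinate `0`; symmetrically for `(0, 2)`. The atom `(1, 1)` is not,
since `2 • (1, 1) = (0, 2) + (2, 0)`. Finally a nonzero `p = (x, y)` divides
`(x + y, x + y) = p + (y, x)`, which splits either as `(x + y, 0) + (0, x + y)` or as
`(x + y - 1, 1) + (1, x + y - 1)` into two summands not above `p`.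
-/

theorem AddIsAtomIn.ne_zero {G : Type*} [AddCommGroup G] {M : AddSubmonoid G} {a : G}
    (ha : AddIsAtomIn M a) : a ≠ 0 := by
  rintro rfl
  exact ha.2.1 ⟨M.zero_mem, by simp⟩

section OrderedGroup

variable {G : Type*} [AddCommGroup G] [PartialOrder G] [IsOrderedAddMonoid G]
  {M : AddSubmonoid G}

theorem addIsUnitIn_iff_eq_zero (hM : ∀ x ∈ M, 0 ≤ x) {x : G} : AddIsUnitIn M x ↔ x = 0 := by
  constructor
  · rintro ⟨hx, hnx⟩
    exact le_antisymm (neg_nonneg.1 (hM _ hnx)) (hM _ hx)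
  · rintro rfl
    exact ⟨M.zero_mem, by simp⟩

theorem AddIsAtomIn.addIsStrongAtomIn_of_forall_le (hM : ∀ x ∈ M, 0 ≤ x) {a : G}
    (ha : AddIsAtomIn M a) (hle : ∀ (n : ℕ) (b : G), AddIsAtomIn M b → b ≤ n • a → b = a) :
    AddIsStrongAtomIn M a := by
  refine ⟨ha, fun n _ s hs hsum => ?_⟩
  have hall : ∀ b ∈ s, b = a := fun b hb =>
    hle n b (hs b hb) (hsum ▸ Multiset.single_le_sum (fun c hc => hM c (hs c hc).1) b hb)
  rw [Multiset.eq_replicate_card.2 hall, Multiset.sum_replicate] at hsum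
  rw [Multiset.eq_replicate_card.2 hall,
    (nsmul_left_strictMono ((hM a ha.1).lt_of_ne ha.ne_zero.symm)).injective hsum]

end OrderedGroup

def evenQuadrant : AddSubmonoid (ℤ × ℤ) where
  carrier := {x | 0 ≤ x.1 ∧ 0 ≤ x.2 ∧ 2 ∣ x.1 + x.2}
  zero_mem' := by simp
  add_mem' := by
    rintro a b ⟨ha₁, ha₂, ha⟩ ⟨hb₁, hb₂, hb⟩
    exact ⟨add_nonneg ha₁ hb₁, add_nonneg ha₂ hb₂, by rw [Prod.fst_add, Prod.snd_add]; omega⟩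

namespace evenQuadrant

theorem mem_iff {x : ℤ × ℤ} : x ∈ evenQuadrant ↔ 0 ≤ x.1 ∧ 0 ≤ x.2 ∧ 2 ∣ x.1 + x.2 := Iff.rfl

theorem nonneg {x : ℤ × ℤ} (hx : x ∈ evenQuadrant) : 0 ≤ x := Prod.le_def.2 ⟨hx.1, hx.2.1⟩

theorem closure_eq :
    AddSubmonoid.closure {((0 : ℤ), (2 : ℤ)), (1, 1), (2, 0)} = evenQuadrant := by
  refine le_antisymm (AddSubmonoid.closure_le.2 ?_) fun x ⟨h₁, h₂, h⟩ => ?_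
  · rintro x (rfl | rfl | rfl) <;> simp [mem_iff]
  · obtain ⟨i, j, k, rfl⟩ : ∃ i j k : ℕ,
        x = i • ((0 : ℤ), (2 : ℤ)) + j • ((1 : ℤ), (1 : ℤ)) + k • ((2 : ℤ), (0 : ℤ)) :=
      ⟨(x.2 / 2).toNat, (x.1 % 2).toNat, (x.1 / 2).toNat, by ext <;> simp <;> omega⟩
    have hgen {g : ℤ × ℤ} (hg : g ∈ ({((0 : ℤ), (2 : ℤ)), (1, 1), (2, 0)} : Set (ℤ × ℤ)))
        (n : ℕ) : n • g ∈ AddSubmonoid.closure {((0 : ℤ), (2 : ℤ)), (1, 1), (2, 0)} :=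
      AddSubmonoid.nsmul_mem _ (AddSubmonoid.subset_closure hg) n
    exact add_mem (add_mem (hgen (by simp) i) (hgen (by simp) j)) (hgen (by simp) k)

theorem addIsUnitIn_iff {x : ℤ × ℤ} : AddIsUnitIn evenQuadrant x ↔ x = 0 :=
  addIsUnitIn_iff_eq_zero fun _ => nonneg

theorem addIsAtomIn_iff {x : ℤ × ℤ} :
    AddIsAtomIn evenQuadrant x ↔ x ∈ evenQuadrant ∧ x.1 + x.2 = 2 := by
  simp only [AddIsAtomIn, addIsUnitIn_iff, and_congr_right_iff]
  rintro ⟨hx₁, hx₂, hx⟩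
  constructor
  · rintro ⟨hx0, hsplit⟩
    by_contra hdeg
    -- `x` has degree at least `4`, so some generator `g` of degree `2` lies strictly below it
    obtain ⟨g, hg, hxg, hg0, hxg0⟩ : ∃ g ∈ evenQuadrant, x - g ∈ evenQuadrant ∧
        g ≠ 0 ∧ x - g ≠ 0 := by
      rw [Prod.ext_iff, Prod.fst_zero, Prod.snd_zero] at hx0
      by_cases h : 2 ≤ x.1
      · refine ⟨(2, 0), by simp [mem_iff], ?_, by simp, ?_⟩ <;>
          simp only [mem_iff, Ne, Prod.ext_iff, Prod.fst_sub, Prod.snd_sub, Prod.fst_zero,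
            Prod.snd_zero] <;> omega
      · refine ⟨(0, 2), by simp [mem_iff], ?_, by simp, ?_⟩ <;>
          simp only [mem_iff, Ne, Prod.ext_iff, Prod.fst_sub, Prod.snd_sub, Prod.fst_zero,
            Prod.snd_zero] <;> omega
    exact (hsplit g (x - g) hg hxg (add_sub_cancel g x).symm).elim hg0 hxg0
  · intro hdeg
    refine ⟨fun h => by simp [h] at hdeg, fun b c ⟨hb₁, hb₂, hb⟩ ⟨hc₁, hc₂, hc⟩ hbc => ?_⟩
    subst hbc
    simp only [Prod.fst_add, Prod.snd_add, Prod.ext_iff, Prod.fst_zero, Prod.snd_zero] at *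
    omega

theorem addIsAtomIn_iff_mem_generators {x : ℤ × ℤ} :
    AddIsAtomIn evenQuadrant x ↔ x = (0, 2) ∨ x = (1, 1) ∨ x = (2, 0) := by
  rw [addIsAtomIn_iff, mem_iff]
  constructor
  · rintro ⟨⟨h₁, h₂, -⟩, h⟩
    simp only [Prod.ext_iff]
    omega
  · rintro (rfl | rfl | rfl) <;> decide

theorem addIsStrongAtomIn_iff {x : ℤ × ℤ} :
    AddIsStrongAtomIn evenQuadrant x ↔ x = (0, 2) ∨ x = (2, 0) := by
  constructor
  · rintro ⟨hx, hstrong⟩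
    rcases addIsAtomIn_iff_mem_generators.1 hx with rfl | rfl | rfl
    · exact .inl rfl
    · have hsplit := hstrong 2 two_pos {(0, 2), (2, 0)}
        (by simp [addIsAtomIn_iff_mem_generators]) (by decide)
      have h02 : ((0 : ℤ), (2 : ℤ)) ∈ Multiset.replicate 2 ((1 : ℤ), (1 : ℤ)) :=
        hsplit ▸ Multiset.mem_cons_self _ _
      simp at h02
    · exact .inr rfl
  · rintro (rfl | rfl) <;>
      refine (addIsAtomIn_iff_mem_generators.2 (by simp)).addIsStrongAtomIn_of_forall_le
        (fun _ => nonneg) fun n b hb hbn => ?_ <;>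
      obtain ⟨⟨h₁, h₂, -⟩, h⟩ := addIsAtomIn_iff.1 hb <;>
      simp only [Prod.le_def, Prod.smul_fst, Prod.smul_snd, Prod.ext_iff] at hbn ⊢ <;>
      simp only [smul_zero, nsmul_eq_mul] at hbn <;>
      omega

theorem not_addIsPrimeIn (p : ℤ × ℤ) : ¬ AddIsPrimeIn evenQuadrant p := by
  rintro ⟨⟨hp₁, hp₂, hp⟩, hp0, hprime⟩
  rw [addIsUnitIn_iff, Prod.ext_iff, Prod.fst_zero, Prod.snd_zero] at hp0
  obtain ⟨b, c, hb, hc, hbc, hpb, hpc⟩ : ∃ b c, b ∈ evenQuadrant ∧ c ∈ evenQuadrant ∧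
      b + c = p + (p.2, p.1) ∧ ¬ p ≤ b ∧ ¬ p ≤ c := by
    by_cases h : p.1 = 0 ∨ p.2 = 0
    · refine ⟨(p.1 + p.2 - 1, 1), (1, p.1 + p.2 - 1), ?_, ?_, ?_, ?_, ?_⟩ <;>
        simp only [mem_iff, Prod.le_def, Prod.ext_iff, Prod.fst_add, Prod.snd_add] <;> omega
    · refine ⟨(p.1 + p.2, 0), (0, p.1 + p.2), ?_, ?_, ?_, ?_, ?_⟩ <;>
        simp only [mem_iff, Prod.le_def, Prod.ext_iff, Prod.fst_add, Prod.snd_add] <;> omega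
  have hswap : (p.2, p.1) ∈ evenQuadrant := ⟨hp₂, hp₁, by rwa [add_comm]⟩
  have le_of_dvd {y : ℤ × ℤ} : (∃ d ∈ evenQuadrant, y = p + d) → p ≤ y := by
    rintro ⟨d, hd, rfl⟩
    exact le_add_of_nonneg_right (nonneg hd)
  exact (hprime b c hb hc ⟨_, hswap, hbc⟩).elim (hpb ∘ le_of_dvd) (hpc ∘ le_of_dvd)

end evenQuadrant

/-- For the additive submonoid of `ℤ²` generated by `a₀ = (0,2)`, `a₁ = (1,1)`, `a₂ = (2,0)`,
the set of atoms is `{a₀, a₁, a₂}`, the set of strong atoms is `{a₀, a₂}`, and there are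
no prime elements. -/
theorem rank_two_monoid_atoms_strong_atoms_primes
    (M : AddSubmonoid (ℤ × ℤ))
    (hM : M = AddSubmonoid.closure {((0 : ℤ), (2 : ℤ)), (1, 1), (2, 0)}) :
    {a : ℤ × ℤ | AddIsAtomIn M a} = {((0 : ℤ), (2 : ℤ)), (1, 1), (2, 0)} ∧
    {a : ℤ × ℤ | AddIsStrongAtomIn M a} = {((0 : ℤ), (2 : ℤ)), (2, 0)} ∧
    (∀ p : ℤ × ℤ, ¬ AddIsPrimeIn M p) := by
  rw [hM, evenQuadrant.closure_eq]
  refine ⟨?_, ?_, evenQuadrant.not_addIsPrimeIn⟩ <;> ext x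
  · exact evenQuadrant.addIsAtomIn_iff_mem_generators
  · exact evenQuadrant.addIsStrongAtomIn_iff
end

section
/- For each n ∈ ℕ₀ set aₙ = (n²−1, 2n, n²+1) ∈ ℤ³, and let M be the additive submonoid of ℤ³ generated by {aₙ : n ∈ ℕ₀}. Then M is atomic and every aₙ is a strong atom of M; in particular M is a rank-3 atomic monoid with infinitely many strong atoms. -/
/-! The functional `(x, y, z) ↦ z - x` takes the value `2` on every generator, so it counts the
generators in any sum. Hence `0` is the only unit, the atoms are exactly the generators and every
element is a sum of atoms. The generators `aₘ = (m² - 1, 2m, m² + 1)` are the lattice points of a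
parabola: a sum of generators `a_{m₁} + ⋯ + a_{mₖ}` determines `k`, `∑ mᵢ` and `∑ mᵢ²`, and if
these agree with those of `n • aₘ` then `∑ (mᵢ - m)² = 0`, so every `mᵢ = m`. -/

namespace Multiset

variable {R : Type*} [CommRing R]

theorem sum_map_sub_sq (s : Multiset R) (m : R) :
    (s.map fun x => (x - m) ^ 2).sum = (s.map (· ^ 2)).sum - 2 * m * s.sum + card s * m ^ 2 := by
  induction s using Multiset.induction with
  | empty => simp
  | cons x s ih =>
    simp only [map_cons, sum_cons, card_cons, ih]
    push_cast
    ring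

theorem eq_replicate_of_sum_of_sum_sq [LinearOrder R] [IsStrictOrderedRing R]
    {s : Multiset R} {m : R} (hsum : s.sum = card s * m)
    (hsq : (s.map (· ^ 2)).sum = card s * m ^ 2) : s = replicate (card s) m := by
  have hvar : (s.map fun x => (x - m) ^ 2).sum = 0 := by
    rw [sum_map_sub_sq, hsum, hsq]; ring
  refine eq_replicate_card.mpr fun x hx => ?_
  have hx0 := all_zero_of_le_zero_le_of_sum_eq_zero (by simp [sq_nonneg]) hvar _
    (mem_map_of_mem _ hx)
  exact sub_eq_zero.mp (pow_eq_zero_iff two_ne_zero |>.mp hx0)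

theorem exists_map_eq_of_forall_mem_range {α β : Type*} {f : α → β} {s : Multiset β}
    (h : ∀ b ∈ s, b ∈ Set.range f) : ∃ t : Multiset α, t.map f = s := by
  have : CanLift β α f (· ∈ Set.range f) := ⟨fun _ => id⟩
  lift s to Multiset α using h
  exact ⟨s, rfl⟩

end Multiset

namespace AddSubmonoid

variable {G : Type*} [AddCommGroup G] {S : Set G} {φ : G →+ ℤ} {d : ℤ}

theorem exists_multiset_of_mem_closure_of_map_eq (hφ : ∀ s ∈ S, φ s = d) {x : G}
    (hx : x ∈ closure S) :
    ∃ t : Multiset G, (∀ y ∈ t, y ∈ S) ∧ t.sum = x ∧ φ x = Multiset.card t * d := by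
  obtain ⟨t, htS, rfl⟩ := exists_multiset_of_mem_closure hx
  refine ⟨t, htS, rfl, ?_⟩
  rw [map_multiset_sum, Multiset.map_congr rfl fun y hy => hφ y (htS y hy)]
  simp

theorem map_nonneg_of_mem_closure (hd : 0 ≤ d) (hφ : ∀ s ∈ S, φ s = d) {x : G}
    (hx : x ∈ closure S) : 0 ≤ φ x := by
  obtain ⟨t, -, -, ht⟩ := exists_multiset_of_mem_closure_of_map_eq hφ hx
  rw [ht]
  positivity

theorem eq_zero_of_mem_closure_of_map_eq_zero (hd : d ≠ 0) (hφ : ∀ s ∈ S, φ s = d) {x : G}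
    (hx : x ∈ closure S) (h0 : φ x = 0) : x = 0 := by
  obtain ⟨t, -, rfl, ht⟩ := exists_multiset_of_mem_closure_of_map_eq hφ hx
  have : Multiset.card t = 0 := by
    exact_mod_cast (mul_eq_zero.mp (ht ▸ h0)).resolve_right hd
  simp [Multiset.card_eq_zero.mp this]

theorem addIsUnitIn_closure_iff (hd : 0 < d) (hφ : ∀ s ∈ S, φ s = d) {x : G} :
    AddIsUnitIn (closure S) x ↔ x = 0 := by
  refine ⟨fun ⟨hx, hnx⟩ => eq_zero_of_mem_closure_of_map_eq_zero hd.ne' hφ hx ?_, ?_⟩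
  · have hpos := map_nonneg_of_mem_closure hd.le hφ hx
    have hneg := map_nonneg_of_mem_closure hd.le hφ hnx
    rw [map_neg] at hneg
    omega
  · rintro rfl
    exact ⟨zero_mem _, by simp⟩

theorem addIsAtomIn_closure_of_mem (hd : 0 < d) (hφ : ∀ s ∈ S, φ s = d) {s : G} (hs : s ∈ S) :
    AddIsAtomIn (closure S) s := by
  simp only [AddIsAtomIn, addIsUnitIn_closure_iff hd hφ]
  refine ⟨subset_closure hs, fun h0 => hd.ne' ?_, fun b c hb hc hbc => ?_⟩
  · rw [← hφ s hs, h0, map_zero]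
  obtain ⟨t, -, rfl, hbt⟩ := exists_multiset_of_mem_closure_of_map_eq hφ hb
  obtain ⟨u, -, rfl, hcu⟩ := exists_multiset_of_mem_closure_of_map_eq hφ hc
  have hcard : (Multiset.card t + Multiset.card u : ℤ) * d = 1 * d := by
    rw [add_mul, ← hbt, ← hcu, ← map_add, ← hbc, hφ s hs, one_mul]
  have : Multiset.card t + Multiset.card u = 1 := by
    exact_mod_cast mul_right_cancel₀ hd.ne' hcard
  rcases Nat.add_eq_one_iff.mp this with ⟨ht, -⟩ | ⟨-, hu⟩
  · simp [Multiset.card_eq_zero.mp ht]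
  · simp [Multiset.card_eq_zero.mp hu]

theorem mem_of_addIsAtomIn_closure (hd : 0 < d) (hφ : ∀ s ∈ S, φ s = d) {b : G}
    (hb : AddIsAtomIn (closure S) b) : b ∈ S := by
  obtain ⟨hbS, hb0, hsplit⟩ := hb
  simp only [addIsUnitIn_closure_iff hd hφ] at hb0 hsplit
  obtain ⟨t, htS, rfl⟩ := exists_multiset_of_mem_closure hbS
  obtain ⟨y, hy⟩ := Multiset.exists_mem_of_ne_zero (s := t) (by rintro rfl; simp at hb0)
  obtain ⟨u, rfl⟩ := Multiset.exists_cons_of_mem hy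
  have hyS : y ∈ S := htS y (Multiset.mem_cons_self y u)
  have hy0 : y ≠ 0 := fun h => hd.ne' (by rw [← hφ y hyS, h, map_zero])
  have huS : u.sum ∈ closure S :=
    multiset_sum_mem _ _ fun z hz => subset_closure (htS z (Multiset.mem_cons_of_mem hz))
  rcases hsplit y u.sum (subset_closure hyS) huS (Multiset.sum_cons y u) with h | h
  · exact absurd h hy0
  · rwa [Multiset.sum_cons, h, add_zero]

theorem addIsAtomicIn_closure (hd : 0 < d) (hφ : ∀ s ∈ S, φ s = d) :
    AddIsAtomicIn (closure S) := fun _ hx _ =>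
  let ⟨t, htS, hsum⟩ := exists_multiset_of_mem_closure hx
  ⟨t, fun a ha => addIsAtomIn_closure_of_mem hd hφ (htS a ha), hsum⟩

end AddSubmonoid

def euclidTriple (n : ℤ) : ℤ × ℤ × ℤ := (n ^ 2 - 1, 2 * n, n ^ 2 + 1)

def zSubX : ℤ × ℤ × ℤ →+ ℤ :=
  AddMonoidHom.mk' (fun p => p.2.2 - p.1) fun p q => by simp only [Prod.snd_add, Prod.fst_add]; ring

theorem zSubX_euclidTriple (n : ℤ) : zSubX (euclidTriple n) = 2 := by
  simp only [zSubX, euclidTriple, AddMonoidHom.mk'_apply]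
  ring

theorem euclidTriple_injective : Function.Injective euclidTriple := fun m n h => by
  simpa [euclidTriple] using congrArg (·.2.1) h

theorem sum_map_euclidTriple (s : Multiset ℤ) :
    (s.map euclidTriple).sum =
      ((s.map (· ^ 2)).sum - (Multiset.card s : ℤ), 2 * s.sum,
        (s.map (· ^ 2)).sum + (Multiset.card s : ℤ)) := by
  induction s using Multiset.induction with
  | empty => rfl
  | cons x s ih =>
    simp only [Multiset.map_cons, Multiset.sum_cons, Multiset.card_cons, ih, euclidTriple,
      Prod.mk_add_mk, Prod.mk.injEq]
    push_cast
    refine ⟨by ring, by ring, by ring⟩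

theorem eq_replicate_of_sum_map_euclidTriple {s : Multiset ℤ} {n : ℕ} {m : ℤ}
    (h : (s.map euclidTriple).sum = n • euclidTriple m) : s = Multiset.replicate n m := by
  rw [← Multiset.sum_replicate, ← Multiset.map_replicate, sum_map_euclidTriple,
    sum_map_euclidTriple] at h
  simp only [Multiset.map_replicate, Multiset.sum_replicate, Multiset.card_replicate, nsmul_eq_mul,
    Prod.mk.injEq] at h
  obtain ⟨h1, h2, h3⟩ := h
  have hcard : (Multiset.card s : ℤ) = n := by linarith
  rw [← Nat.cast_inj.mp hcard]
  exact Multiset.eq_replicate_of_sum_of_sum_sq (by rw [hcard]; linarith) (by rw [hcard]; linarith)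

theorem addIsStrongAtomIn_closure_euclidTriple {T : Set ℤ} {m : ℤ} (hm : m ∈ T) :
    AddIsStrongAtomIn (AddSubmonoid.closure (euclidTriple '' T)) (euclidTriple m) := by
  have hφ : ∀ s ∈ euclidTriple '' T, zSubX s = 2 :=
    Set.forall_mem_image.mpr fun k _ => zSubX_euclidTriple k
  refine ⟨AddSubmonoid.addIsAtomIn_closure_of_mem two_pos hφ ⟨m, hm, rfl⟩, ?_⟩
  intro n _ s hs hsum
  obtain ⟨v, rfl⟩ := Multiset.exists_map_eq_of_forall_mem_range fun b hb =>
    Set.image_subset_range _ _ (AddSubmonoid.mem_of_addIsAtomIn_closure two_pos hφ (hs b hb))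
  rw [eq_replicate_of_sum_map_euclidTriple hsum, Multiset.map_replicate]

theorem finrank_span_eq_three_of_mem {s : Set (ℚ × ℚ × ℚ)} (h₀ : (-1, 0, 1) ∈ Submodule.span ℚ s)
    (h₁ : (0, 2, 2) ∈ Submodule.span ℚ s) (h₂ : (3, 4, 5) ∈ Submodule.span ℚ s) :
    Module.finrank ℚ (Submodule.span ℚ s) = 3 := by
  set p := Submodule.span ℚ s
  have htop : p = ⊤ := by
    refine eq_top_iff.mpr fun ⟨x, y, z⟩ _ => ?_
    have := p.add_mem (p.add_mem (p.smul_mem ((-x - 3 * y + 3 * z) / 4) h₀)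
      (p.smul_mem ((2 * y - x - z) / 2) h₁)) (p.smul_mem ((x - y + z) / 4) h₂)
    convert this using 1
    simp only [Prod.smul_mk, Prod.mk_add_mk, smul_eq_mul, Prod.mk.injEq]
    refine ⟨by ring, by ring, by ring⟩
  rw [htop, finrank_top]
  simp

/-- For `aₙ = (n²−1, 2n, n²+1) ∈ ℤ³`, the additive submonoid `M` generated by all `aₙ`
is atomic and every `aₙ` is a strong atom of `M`; in particular `M` is an atomic monoid
of rank 3 with infinitely many strong atoms. -/
theorem infinitely_many_strong_atoms_example
    (a : ℕ → ℤ × ℤ × ℤ)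
    (ha : ∀ n : ℕ, a n = ((n : ℤ) ^ 2 - 1, 2 * (n : ℤ), (n : ℤ) ^ 2 + 1))
    (M : AddSubmonoid (ℤ × ℤ × ℤ)) (hM : M = AddSubmonoid.closure (Set.range a)) :
    AddIsAtomicIn M ∧
    (∀ n : ℕ, AddIsStrongAtomIn M (a n)) ∧
    {x : ℤ × ℤ × ℤ | AddIsStrongAtomIn M x}.Infinite ∧
    Module.finrank ℚ (Submodule.span ℚ
      ((fun p : ℤ × ℤ × ℤ => ((p.1 : ℚ), (p.2.1 : ℚ), (p.2.2 : ℚ))) '' (M : Set (ℤ × ℤ × ℤ)))) = 3 := by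
  obtain rfl : a = euclidTriple ∘ Nat.cast := funext ha
  rw [Set.range_comp] at hM
  subst hM
  have hstrong (n : ℕ) :=
    addIsStrongAtomIn_closure_euclidTriple (Set.mem_range_self (f := ((↑) : ℕ → ℤ)) n)
  refine ⟨AddSubmonoid.addIsAtomicIn_closure two_pos
      (Set.forall_mem_image.mpr fun k _ => zSubX_euclidTriple k), hstrong,
    Set.infinite_of_injective_forall_mem
      (euclidTriple_injective.comp Nat.cast_injective) hstrong, ?_⟩
  set ι := fun p : ℤ × ℤ × ℤ => ((p.1 : ℚ), (p.2.1 : ℚ), (p.2.2 : ℚ))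
  have hgen (n : ℕ) := Submodule.subset_span (R := ℚ) (Set.mem_image_of_mem ι (hstrong n).1.1)
  apply finrank_span_eq_three_of_mem
  · simpa [ι, euclidTriple] using hgen 0
  · simpa [ι, euclidTriple] using hgen 1
  · simpa [ι, euclidTriple] using hgen 2
end

section
/- Let H = 4ℕ₀ + 1 be the Hilbert monoid under multiplication. Then the set of prime elements of H is exactly {p prime : p ≡ 1 (mod 4)}, and the set of strong atoms of H is {p prime : p ≡ 1 (mod 4)} ∪ {p² : p prime, p ≡ 3 (mod 4)}. -/
/-- `a` is an atom of the multiplicative submonoid `H ⊆ ℕ`: a non-unit element of `H`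
that is not a product of two non-units of `H` (the only unit of such an `H` is `1`). -/
def MulIsAtomIn (H : Submonoid ℕ) (a : ℕ) : Prop :=
  a ∈ H ∧ a ≠ 1 ∧ ∀ b c : ℕ, b ∈ H → c ∈ H → a = b * c → b = 1 ∨ c = 1

/-- Divisibility within the submonoid `H ⊆ ℕ`. -/
def MulDvdIn (H : Submonoid ℕ) (a b : ℕ) : Prop := ∃ c ∈ H, b = a * c

/-- `p` is a prime element of `H`: a non-unit such that whenever `p` divides a product
`b * c` in `H`, it divides `b` or `c` in `H`. -/
def MulIsPrimeIn (H : Submonoid ℕ) (p : ℕ) : Prop :=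
  p ∈ H ∧ p ≠ 1 ∧ ∀ b c : ℕ, b ∈ H → c ∈ H →
    MulDvdIn H p (b * c) → MulDvdIn H p b ∨ MulDvdIn H p c

/-- `a` is a strong atom of `H`: an atom all of whose powers `a ^ n` factor uniquely into
atoms of `H` (namely as `n` copies of `a`). -/
def MulIsStrongAtomIn (H : Submonoid ℕ) (a : ℕ) : Prop :=
  MulIsAtomIn H a ∧ ∀ n : ℕ, 0 < n → ∀ s : Multiset ℕ,
    (∀ b ∈ s, MulIsAtomIn H b) → s.prod = a ^ n → s = Multiset.replicate n a

/-!
The atoms of `H = 4ℕ₀ + 1` are the rational primes `p ≡ 1 (mod 4)` and the products `q * r` of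
two rational primes `q, r ≡ 3 (mod 4)`. Divisibility in `H` by a prime `p ≡ 1` is ordinary
divisibility, so such `p` stays prime in `H`; a product `q * r` divides `(q * s) * (r * s)` in `H`
for any prime `s ≡ 3` other than `q, r` (Dirichlet), but divides neither factor. Every atom dividing
a power of a rational prime `p` is `p` or `p ^ 2`, which makes `p ≡ 1` and `p ^ 2` with `p ≡ 3`
strong atoms, whereas for `q ≠ r` the square `(q * r) ^ 2 = (q * q) * (r * r)` factors in two ways.
-/

def hilbertMonoid : Submonoid ℕ where
  carrier := {n | n % 4 = 1}
  one_mem' := rfl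
  mul_mem' {a b} (ha : a % 4 = 1) (hb : b % 4 = 1) := by
    show a * b % 4 = 1
    rw [Nat.mul_mod, ha, hb]

/-- The odd residues modulo `4` are their own inverses. -/
lemma mul_mod_four_eq_one_iff {a b : ℕ} (ha : a % 4 = 1 ∨ a % 4 = 3) :
    a * b % 4 = 1 ↔ b % 4 = a % 4 := by
  rw [Nat.mul_mod]
  rcases ha with ha | ha <;> rw [ha] <;> omega

lemma mod_four_of_dvd {d n : ℕ} (hn : n % 4 = 1) (hd : d ∣ n) : d % 4 = 1 ∨ d % 4 = 3 :=
  Nat.odd_mod_four_iff.mp <| Nat.odd_iff.mp <| (Nat.odd_iff.mpr (by omega)).of_dvd_nat hd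

section Submonoid

variable {H : Submonoid ℕ}

lemma Nat.Prime.mulIsAtomIn {p : ℕ} (hp : p.Prime) (hpH : p ∈ H) : MulIsAtomIn H p := by
  refine ⟨hpH, hp.ne_one, fun b c _ _ hbc => ?_⟩
  rcases Nat.prime_mul_iff.mp (hbc ▸ hp) with ⟨-, hc⟩ | ⟨-, hb⟩
  exacts [.inr hc, .inl hb]

lemma MulIsPrimeIn.mulIsAtomIn {p : ℕ} (hp : MulIsPrimeIn H p) (hp0 : p ≠ 0) :
    MulIsAtomIn H p := by
  obtain ⟨hpH, hp1, hdvd⟩ := hp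
  refine ⟨hpH, hp1, fun b c hb hc hbc => ?_⟩
  have hb0 : b ≠ 0 := by rintro rfl; simp_all
  have hc0 : c ≠ 0 := by rintro rfl; simp_all
  rcases hdvd b c hb hc ⟨1, H.one_mem, by rw [hbc, mul_one]⟩ with ⟨d, -, hd⟩ | ⟨d, -, hd⟩
  · have : b * (c * d) = b := by rw [← mul_assoc, ← hbc, ← hd]
    exact .inr (Nat.eq_one_of_mul_eq_one_right ((mul_eq_left₀ hb0).mp this))
  · have : c * (b * d) = c := by rw [← mul_assoc, mul_comm c, ← hbc, ← hd]
    exact .inl (Nat.eq_one_of_mul_eq_one_right ((mul_eq_left₀ hc0).mp this))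

lemma MulIsAtomIn.mulIsStrongAtomIn {a : ℕ} (ha : MulIsAtomIn H a) (ha0 : a ≠ 0)
    (hdvd : ∀ n b, MulIsAtomIn H b → b ∣ a ^ n → b = a) : MulIsStrongAtomIn H a := by
  refine ⟨ha, fun n _ s hs hprod => ?_⟩
  have hrep : s = Multiset.replicate (Multiset.card s) a := Multiset.eq_replicate_card.mpr
    fun b hb => hdvd n b (hs b hb) (hprod ▸ Multiset.dvd_prod hb)
  rw [hrep, Multiset.prod_replicate] at hprod
  rw [hrep, Nat.pow_right_injective (by have := ha.2.1; omega) hprod]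

end Submonoid

lemma mulIsAtomIn_hilbertMonoid_mul {q r : ℕ} (hq : q.Prime) (hr : r.Prime) (hq3 : q % 4 = 3)
    (hr3 : r % 4 = 3) : MulIsAtomIn hilbertMonoid (q * r) := by
  have cofactor_eq_one : ∀ b c, b % 4 = 1 → q * r = b * c → q ∣ b → c = 1 := by
    rintro b c hb hbc ⟨b', rfl⟩
    have hr' : r = b' * c := Nat.eq_of_mul_eq_mul_left hq.pos (by rw [hbc, mul_assoc])
    rcases Nat.prime_mul_iff.mp (hr' ▸ hr) with ⟨-, hc⟩ | ⟨-, rfl⟩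
    · exact hc
    · rw [mul_one] at hb; omega
  refine ⟨(mul_mod_four_eq_one_iff (.inr hq3)).mpr (hr3.trans hq3.symm),
    fun h => hq.ne_one (Nat.eq_one_of_mul_eq_one_right h), fun b c hb hc hbc => ?_⟩
  rcases hq.dvd_mul.mp (Dvd.intro r hbc) with hqb | hqc
  · exact .inr (cofactor_eq_one b c hb hbc hqb)
  · exact .inl (cofactor_eq_one c b hc (hbc.trans (mul_comm b c)) hqc)

lemma MulIsAtomIn.hilbertMonoid_cases {a : ℕ} (ha : MulIsAtomIn hilbertMonoid a) :
    (a.Prime ∧ a % 4 = 1) ∨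
      ∃ q r, q.Prime ∧ r.Prime ∧ q % 4 = 3 ∧ r % 4 = 3 ∧ a = q * r := by
  obtain ⟨ha4 : a % 4 = 1, ha1, hfac⟩ := ha
  have hfac' : ∀ b c, b % 4 = 1 → a = b * c → b = 1 ∨ c = 1 := fun b c hb h =>
    hfac b c hb (((mul_mod_four_eq_one_iff (.inl hb)).mp (h ▸ ha4)).trans hb) h
  by_cases h1 : ∃ q, q.Prime ∧ q ∣ a ∧ q % 4 = 1
  · obtain ⟨q, hq, ⟨m, rfl⟩, hq4⟩ := h1
    rcases hfac' q m hq4 rfl with h | rfl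
    · exact absurd h hq.ne_one
    · rw [mul_one] at ha4 ⊢
      exact .inl ⟨hq, ha4⟩
  push Not at h1
  have h3 : ∀ q, q.Prime → q ∣ a → q % 4 = 3 := fun q hq hqa =>
    (mod_four_of_dvd ha4 hqa).resolve_left (h1 q hq hqa)
  obtain ⟨q, hq, m, hm⟩ := Nat.exists_prime_and_dvd ha1
  have hq3 := h3 q hq (Dvd.intro m hm.symm)
  have hm3 : m % 4 = 3 := ((mul_mod_four_eq_one_iff (.inr hq3)).mp (hm ▸ ha4)).trans hq3
  obtain ⟨r, hr, k, hk⟩ := Nat.exists_prime_and_dvd (show m ≠ 1 by omega)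
  have hr3 := h3 r hr (hm ▸ (Dvd.intro k hk.symm).mul_left q)
  have hqr : q * r % 4 = 1 := (mul_mod_four_eq_one_iff (.inr hq3)).mpr (hr3.trans hq3.symm)
  have hak : a = q * r * k := by rw [hm, hk, mul_assoc]
  rcases hfac' _ k hqr hak with h | rfl
  · exact absurd (Nat.eq_one_of_mul_eq_one_right h) hq.ne_one
  · exact .inr ⟨q, r, hq, hr, hq3, hr3, by rwa [mul_one] at hak⟩

lemma mulDvdIn_hilbertMonoid_iff {p n : ℕ} (hp : p % 4 = 1) (hn : n % 4 = 1) :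
    MulDvdIn hilbertMonoid p n ↔ p ∣ n := by
  refine ⟨fun ⟨c, _, h⟩ => ⟨c, h⟩, ?_⟩
  rintro ⟨c, rfl⟩
  exact ⟨c, ((mul_mod_four_eq_one_iff (.inl hp)).mp hn).trans hp, rfl⟩

lemma Nat.Prime.mulIsPrimeIn_hilbertMonoid {p : ℕ} (hp : p.Prime) (hp4 : p % 4 = 1) :
    MulIsPrimeIn hilbertMonoid p := by
  refine ⟨hp4, hp.ne_one, fun b c hb hc hbc => ?_⟩
  rw [mulDvdIn_hilbertMonoid_iff hp4 (hilbertMonoid.mul_mem hb hc)] at hbc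
  rw [mulDvdIn_hilbertMonoid_iff hp4 hb, mulDvdIn_hilbertMonoid_iff hp4 hc]
  exact hp.dvd_mul.mp hbc

lemma not_mulIsPrimeIn_hilbertMonoid_mul {q r : ℕ} (hq : q.Prime) (hr : r.Prime)
    (hq3 : q % 4 = 3) (hr3 : r % 4 = 3) : ¬ MulIsPrimeIn hilbertMonoid (q * r) := by
  rintro ⟨-, -, hprime⟩
  obtain ⟨s, hs_gt, hs, hs3 : s % 4 = 3⟩ :=
    Nat.forall_exists_prime_gt_and_modEq (q * r) (by norm_num) (by decide : Nat.Coprime 3 4)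
  have hq_lt : q < s := lt_of_le_of_lt (Nat.le_mul_of_pos_right q hr.pos) hs_gt
  have hr_lt : r < s := lt_of_le_of_lt (Nat.le_mul_of_pos_left r hq.pos) hs_gt
  have mul_s_mem : ∀ x, x % 4 = 3 → x * s ∈ hilbertMonoid := fun x hx =>
    (mul_mod_four_eq_one_iff (.inr hx)).mpr (hs3.trans hx.symm)
  have hdvd : MulDvdIn hilbertMonoid (q * r) (q * s * (r * s)) :=
    ⟨s * s, mul_s_mem s hs3, by ring⟩
  rcases hprime _ _ (mul_s_mem q hq3) (mul_s_mem r hr3) hdvd with ⟨c, -, hc⟩ | ⟨c, -, hc⟩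
  · have hrs : r ∣ s := (Nat.mul_dvd_mul_iff_left hq.pos).mp ⟨c, by rw [hc, mul_assoc]⟩
    exact hr_lt.ne ((Nat.prime_dvd_prime_iff_eq hr hs).mp hrs)
  · have hqs : q ∣ s := (Nat.mul_dvd_mul_iff_left hr.pos).mp ⟨c, by rw [hc, mul_comm q, mul_assoc]⟩
    exact hq_lt.ne ((Nat.prime_dvd_prime_iff_eq hq hs).mp hqs)

theorem mulIsPrimeIn_hilbertMonoid_iff {p : ℕ} :
    MulIsPrimeIn hilbertMonoid p ↔ p.Prime ∧ p % 4 = 1 := by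
  refine ⟨fun hp => ?_, fun ⟨hp, hp4⟩ => hp.mulIsPrimeIn_hilbertMonoid hp4⟩
  have hp0 : p ≠ 0 := by have : p % 4 = 1 := hp.1; omega
  rcases (hp.mulIsAtomIn hp0).hilbertMonoid_cases with h | ⟨q, r, hq, hr, hq3, hr3, rfl⟩
  · exact h
  · exact absurd hp (not_mulIsPrimeIn_hilbertMonoid_mul hq hr hq3 hr3)

lemma MulIsAtomIn.eq_or_eq_sq_of_dvd_prime_pow {b p n : ℕ} (hb : MulIsAtomIn hilbertMonoid b)
    (hp : p.Prime) (hdvd : b ∣ p ^ n) : b = p ∨ b = p ^ 2 := by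
  have eq_p : ∀ q, q.Prime → q ∣ b → q = p := fun q hq hqb =>
    (Nat.prime_dvd_prime_iff_eq hq hp).mp (hq.dvd_of_dvd_pow (hqb.trans hdvd))
  rcases hb.hilbertMonoid_cases with ⟨hb, -⟩ | ⟨q, r, hq, hr, -, -, rfl⟩
  · exact .inl (eq_p b hb dvd_rfl)
  · rw [eq_p q hq (dvd_mul_right q r), eq_p r hr (dvd_mul_left r q)]
    exact .inr (sq p).symm

lemma Nat.Prime.mulIsStrongAtomIn_hilbertMonoid {p : ℕ} (hp : p.Prime) (hp4 : p % 4 = 1) :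
    MulIsStrongAtomIn hilbertMonoid p := by
  refine (hp.mulIsAtomIn hp4).mulIsStrongAtomIn hp.ne_zero fun n b hb hdvd => ?_
  refine (hb.eq_or_eq_sq_of_dvd_prime_pow hp hdvd).resolve_right ?_
  rintro rfl
  rcases hb.2.2 p p hp4 hp4 (sq p) with h | h <;> exact hp.ne_one h

lemma mulIsStrongAtomIn_hilbertMonoid_sq {p : ℕ} (hp : p.Prime) (hp3 : p % 4 = 3) :
    MulIsStrongAtomIn hilbertMonoid (p ^ 2) := by
  have hatom : MulIsAtomIn hilbertMonoid (p ^ 2) :=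
    sq p ▸ mulIsAtomIn_hilbertMonoid_mul hp hp hp3 hp3
  refine hatom.mulIsStrongAtomIn (pow_ne_zero 2 hp.ne_zero) fun n b hb hdvd => ?_
  rw [← pow_mul] at hdvd
  refine (hb.eq_or_eq_sq_of_dvd_prime_pow hp hdvd).resolve_left ?_
  rintro rfl
  have : b % 4 = 1 := hb.1
  omega

lemma not_mulIsStrongAtomIn_hilbertMonoid_mul {q r : ℕ} (hq : q.Prime) (hr : r.Prime)
    (hq3 : q % 4 = 3) (hr3 : r % 4 = 3) (hqr : q ≠ r) :
    ¬ MulIsStrongAtomIn hilbertMonoid (q * r) := by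
  rintro ⟨-, hunique⟩
  have hatoms : ∀ b ∈ ({q * q, r * r} : Multiset ℕ), MulIsAtomIn hilbertMonoid b := by
    simp [mulIsAtomIn_hilbertMonoid_mul, *]
  have hs := hunique 2 two_pos {q * q, r * r} hatoms (by simp; ring)
  have hmem : q * q ∈ Multiset.replicate 2 (q * r) := hs ▸ Multiset.mem_cons_self _ _
  exact hqr (Nat.eq_of_mul_eq_mul_left hq.pos (Multiset.eq_of_mem_replicate hmem))

theorem mulIsStrongAtomIn_hilbertMonoid_iff {a : ℕ} :
    MulIsStrongAtomIn hilbertMonoid a ↔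
      (a.Prime ∧ a % 4 = 1) ∨ ∃ p, p.Prime ∧ p % 4 = 3 ∧ a = p ^ 2 := by
  refine ⟨fun ha => ?_, ?_⟩
  · rcases ha.1.hilbertMonoid_cases with h | ⟨q, r, hq, hr, hq3, hr3, rfl⟩
    · exact .inl h
    · obtain rfl : q = r := by_contra fun hqr =>
        not_mulIsStrongAtomIn_hilbertMonoid_mul hq hr hq3 hr3 hqr ha
      exact .inr ⟨q, hq, hq3, (sq q).symm⟩
  · rintro (⟨hp, hp4⟩ | ⟨p, hp, hp3, rfl⟩)
    exacts [hp.mulIsStrongAtomIn_hilbertMonoid hp4, mulIsStrongAtomIn_hilbertMonoid_sq hp hp3]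

/-- In the Hilbert monoid `H = 4ℕ₀ + 1`, the primes are exactly the rational primes
`p ≡ 1 (mod 4)`, and the strong atoms are these primes together with the squares `p²`
of rational primes `p ≡ 3 (mod 4)`. -/
theorem hilbert_monoid_primes_and_strong_atoms (H : Submonoid ℕ)
    (hH : (H : Set ℕ) = {n : ℕ | n % 4 = 1}) :
    {p : ℕ | MulIsPrimeIn H p} = {p : ℕ | Nat.Prime p ∧ p % 4 = 1} ∧
    {a : ℕ | MulIsStrongAtomIn H a} =
      {p : ℕ | Nat.Prime p ∧ p % 4 = 1} ∪
      {m : ℕ | ∃ p : ℕ, Nat.Prime p ∧ p % 4 = 3 ∧ m = p ^ 2} := by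
  obtain rfl : H = hilbertMonoid := SetLike.coe_injective hH
  exact ⟨Set.ext fun _ => mulIsPrimeIn_hilbertMonoid_iff,
    Set.ext fun _ => mulIsStrongAtomIn_hilbertMonoid_iff⟩
end

section
/- Let M be a reduced Krull monoid with torsion class group and let A be a set of strong atoms of M. Then the submonoid ⟨A⟩ of M generated by A is a unique factorization monoid whose set of primes is A; that is, whenever ∏_{a∈A} a^{x(a)} = ∏_{a∈A} a^{y(a)} with almost all exponents zero, then x(a) = y(a) for all a ∈ A. -/
/-- `a` is an atom of the (cancellative commutative) monoid `M`. -/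
def IsAtomM {M : Type*} [CancelCommMonoid M] (a : M) : Prop :=
  ¬ IsUnit a ∧ ∀ b c : M, a = b * c → IsUnit b ∨ IsUnit c

/-- `a` is a strong atom of `M`: an atom all of whose powers `a ^ n` factor uniquely into
atoms of `M` (namely as `n` copies of `a`). -/
def IsStrongAtomM {M : Type*} [CancelCommMonoid M] (a : M) : Prop :=
  IsAtomM a ∧ ∀ n : ℕ, 0 < n → ∀ s : Multiset M,
    (∀ b ∈ s, IsAtomM b) → s.prod = a ^ n → s = Multiset.replicate n a

/-- `p` is a prime element of `M`. -/
def IsPrimeM {M : Type*} [CancelCommMonoid M] (p : M) : Prop :=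
  ¬ IsUnit p ∧ ∀ b c : M, p ∣ b * c → p ∣ b ∨ p ∣ c

/-- `M` is reduced: its only unit is the identity. -/
def IsReducedM (M : Type*) [Monoid M] : Prop := ∀ u : M, IsUnit u → u = 1

/-- `τ : M → F`, with `F` the free commutative monoid on `ι` (written multiplicatively as
`Multiplicative (ι →₀ ℕ)`), is a divisor theory: (1) `τ b ∣ τ c` implies `b ∣ c`;
(2) every `d ∈ F` is a greatest common divisor of finitely many values of `τ`. -/
def IsDivisorTheory {M ι : Type*} [CancelCommMonoid M]
    (τ : M →* Multiplicative (ι →₀ ℕ)) : Prop :=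
  (∀ b c : M, τ b ∣ τ c → b ∣ c) ∧
  (∀ d : Multiplicative (ι →₀ ℕ), ∃ s : Finset M, s.Nonempty ∧
    (∀ b ∈ s, d ∣ τ b) ∧ ∀ e : Multiplicative (ι →₀ ℕ), (∀ b ∈ s, e ∣ τ b) → e ∣ d)

/-- The class group `F/τ(M)` of the divisor theory `τ` is a torsion group: every `d ∈ F`
has a power whose class is trivial, i.e. `d ^ n · τ b = τ c` for some `n ≥ 1` and `b, c ∈ M`. -/
def HasTorsionClassGroup {M ι : Type*} [CancelCommMonoid M]
    (τ : M →* Multiplicative (ι →₀ ℕ)) : Prop :=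
  ∀ d : Multiplicative (ι →₀ ℕ), ∃ n : ℕ, 0 < n ∧ ∃ b c : M, d ^ n * τ b = τ c

/-- `p` is a prime element of the submonoid `N` of `M`. -/
def IsPrimeInSub {M : Type*} [CancelCommMonoid M] (N : Submonoid M) (p : M) : Prop :=
  p ∈ N ∧ ¬ IsUnit p ∧ ∀ b c : M, b ∈ N → c ∈ N → (∃ d ∈ N, b * c = p * d) →
    (∃ d ∈ N, b = p * d) ∨ (∃ d ∈ N, c = p * d)

/-! Let `a` be a strong atom and `i` a prime divisor of `τ a`. Since the class group is torsion,
some `q ∈ M` has `τ q = iⁿ`; then `q ∣ aⁿ`, and every divisor of a power of a strong atom is a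
power of it, so some power of `a` maps to a power of `i`. Consequently two strong atoms sharing a
prime divisor have a common power and are equal, so the `i`-adic exponent of `τ` reads off the
exponent of `a` in any product of elements of `A`: exponents are unique. Unique exponents make
every element of `A` prime in `⟨A⟩`, and a prime of `⟨A⟩` divides one of its own atomic factors,
hence equals it. -/

open Multiplicative

/-- Units must be empty products here, so this is ordinary atomicity only for reduced monoids. -/
def IsAtomicM (M : Type*) [CancelCommMonoid M] : Prop :=
  ∀ c : M, ∃ s : Multiset M, (∀ b ∈ s, IsAtomM b) ∧ s.prod = c

def HasUniqueExponents {M : Type*} [CancelCommMonoid M] (A : Set M) : Prop :=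
  ∀ x y : M →₀ ℕ, ↑x.support ⊆ A → ↑y.support ⊆ A →
    (x.prod fun a n => a ^ n) = (y.prod fun a n => a ^ n) → x = y

section DivisorTheory

variable {M ι : Type*} [CancelCommMonoid M] {τ : M →* Multiplicative (ι →₀ ℕ)}

theorem IsDivisorTheory.toAdd_map_ne_zero (hdt : IsDivisorTheory τ) {a : M} (ha : ¬IsUnit a) :
    (τ a).toAdd ≠ 0 :=
  fun h => ha (isUnit_of_dvd_one (hdt.1 a 1 (by rw [map_one, ← ofAdd_toAdd (τ a), h]; rfl)))

theorem IsDivisorTheory.injective (hdt : IsDivisorTheory τ) (hred : IsReducedM M) :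
    Function.Injective τ := by
  intro a b h
  obtain ⟨u, rfl⟩ := hdt.1 a b (h ▸ dvd_rfl)
  obtain ⟨v, hv⟩ := hdt.1 (a * u) a (h ▸ dvd_rfl)
  have huv : u * v = 1 := mul_left_cancel (a := a) (by rw [mul_one, ← mul_assoc, ← hv])
  rw [hred u (IsUnit.of_mul_eq_one v huv), mul_one]

theorem IsDivisorTheory.isAtomicM (hdt : IsDivisorTheory τ) (hred : IsReducedM M) :
    IsAtomicM M := by
  intro a
  induction hw : Finsupp.degree (τ a).toAdd using Nat.strong_induction_on generalizing a with
  | _ n ih =>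
  by_cases hu : IsUnit a
  · exact ⟨0, by simp, by simp [hred a hu]⟩
  by_cases hat : IsAtomM a
  · exact ⟨{a}, by simpa using hat, by simp⟩
  obtain ⟨b, c, rfl, hb, hc⟩ : ∃ b c, a = b * c ∧ ¬IsUnit b ∧ ¬IsUnit c := by
    simpa [IsAtomM, hu] using hat
  have hdeg : Finsupp.degree (τ (b * c)).toAdd =
      Finsupp.degree (τ b).toAdd + Finsupp.degree (τ c).toAdd := by
    rw [map_mul, toAdd_mul, map_add]
  have hb0 := mt (Finsupp.degree_eq_zero_iff _).1 (hdt.toAdd_map_ne_zero hb)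
  have hc0 := mt (Finsupp.degree_eq_zero_iff _).1 (hdt.toAdd_map_ne_zero hc)
  obtain ⟨s, hs, rfl⟩ := ih _ (by omega) b rfl
  obtain ⟨t, ht, rfl⟩ := ih _ (by omega) c rfl
  exact ⟨s + t, by simpa [or_imp, forall_and] using ⟨hs, ht⟩, Multiset.prod_add s t⟩

theorem HasTorsionClassGroup.exists_map_eq_pow (hdt : IsDivisorTheory τ)
    (htor : HasTorsionClassGroup τ) (d : Multiplicative (ι →₀ ℕ)) :
    ∃ n, 0 < n ∧ ∃ q : M, τ q = d ^ n := by
  obtain ⟨n, hn, b, c, h⟩ := htor d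
  obtain ⟨q, rfl⟩ := hdt.1 b c ⟨d ^ n, by rw [← h, mul_comm]⟩
  exact ⟨n, hn, q, mul_left_cancel (a := τ b) (by rw [← map_mul, ← h, mul_comm])⟩

end DivisorTheory

section StrongAtom

variable {M : Type*} [CancelCommMonoid M]

theorem IsStrongAtomM.eq_replicate_of_prod_dvd_pow (hM : IsAtomicM M) {a : M}
    (ha : IsStrongAtomM a) {n : ℕ} (hn : 0 < n) {s : Multiset M} (hs : ∀ b ∈ s, IsAtomM b)
    (h : s.prod ∣ a ^ n) : s = Multiset.replicate (Multiset.card s) a := by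
  obtain ⟨c, hc⟩ := h
  obtain ⟨t, ht, rfl⟩ := hM c
  have hst := ha.2 n hn (s + t) (by simpa [or_imp, forall_and] using ⟨hs, ht⟩)
    (by rw [Multiset.prod_add, hc])
  exact Multiset.eq_replicate_card.2 fun b hb =>
    Multiset.eq_of_mem_replicate (hst ▸ Multiset.mem_add.2 (Or.inl hb))

theorem IsStrongAtomM.eq_of_dvd_pow (hM : IsAtomicM M) {a b : M} (ha : IsStrongAtomM a)
    (hb : IsAtomM b) {n : ℕ} (hn : 0 < n) (h : b ∣ a ^ n) : b = a := by
  have := ha.eq_replicate_of_prod_dvd_pow hM hn (s := {b}) (by simpa using hb) (by simpa using h)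
  simpa using this

theorem IsStrongAtomM.exists_eq_pow_of_dvd_pow (hM : IsAtomicM M) {a q : M}
    (ha : IsStrongAtomM a) {n : ℕ} (hn : 0 < n) (h : q ∣ a ^ n) : ∃ k, q = a ^ k := by
  obtain ⟨s, hs, rfl⟩ := hM q
  exact ⟨_, by rw [ha.eq_replicate_of_prod_dvd_pow hM hn hs h, Multiset.prod_replicate]⟩

end StrongAtom

section KrullMonoid

variable {M ι : Type*} [CancelCommMonoid M] {τ : M →* Multiplicative (ι →₀ ℕ)}

theorem IsStrongAtomM.exists_map_pow_eq_single (hdt : IsDivisorTheory τ)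
    (htor : HasTorsionClassGroup τ) (hred : IsReducedM M) {a : M} (ha : IsStrongAtomM a) {i : ι}
    (hi : i ∈ (τ a).toAdd.support) :
    ∃ k n, 0 < k ∧ 0 < n ∧ τ (a ^ k) = ofAdd (Finsupp.single i 1) ^ n := by
  obtain ⟨n, hn, q, hq⟩ := htor.exists_map_eq_pow hdt (ofAdd (Finsupp.single i 1))
  have hδ : ofAdd (Finsupp.single i 1) ∣ τ a := le_iff_exists_mul.1 <| ofAdd_le.2 <|
    Finsupp.single_le_iff.2 (Nat.one_le_iff_ne_zero.2 (Finsupp.mem_support_iff.1 hi))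
  have hqa : q ∣ a ^ n := hdt.1 _ _ (by rw [hq, map_pow]; exact pow_dvd_pow_of_dvd hδ n)
  obtain ⟨k, rfl⟩ := ha.exists_eq_pow_of_dvd_pow (hdt.isAtomicM hred) hn hqa
  refine ⟨k, n, Nat.pos_of_ne_zero ?_, hn, hq⟩
  rintro rfl
  have := congrArg (fun d => d.toAdd i) hq
  simp at this
  omega

theorem IsStrongAtomM.eq_of_mem_support (hdt : IsDivisorTheory τ)
    (htor : HasTorsionClassGroup τ) (hred : IsReducedM M) {a b : M} (ha : IsStrongAtomM a)
    (hb : IsStrongAtomM b) {i : ι} (hia : i ∈ (τ a).toAdd.support)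
    (hib : i ∈ (τ b).toAdd.support) : a = b := by
  obtain ⟨k, n, hk, hn, hka⟩ := ha.exists_map_pow_eq_single hdt htor hred hia
  obtain ⟨l, m, hl, hm, hlb⟩ := hb.exists_map_pow_eq_single hdt htor hred hib
  have hpow : a ^ (k * m) = b ^ (l * n) := hdt.injective hred <| by
    rw [pow_mul, pow_mul, map_pow τ (a ^ k), map_pow τ (b ^ l), hka, hlb, ← pow_mul, ← pow_mul,
      mul_comm]
  exact hb.eq_of_dvd_pow (hdt.isAtomicM hred) ha.1 (by positivity)
    (hpow ▸ dvd_pow_self a (by positivity))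

theorem toAdd_map_prod_pow_apply (τ : M →* Multiplicative (ι →₀ ℕ)) (x : M →₀ ℕ) (i : ι) :
    (τ (x.prod fun a n => a ^ n)).toAdd i = x.sum fun b n => n * (τ b).toAdd i := by
  simp [Finsupp.prod, Finsupp.sum, Finsupp.finsetSum_apply]

theorem hasUniqueExponents_of_isStrongAtomM (hdt : IsDivisorTheory τ)
    (htor : HasTorsionClassGroup τ) (hred : IsReducedM M) {A : Set M}
    (hA : ∀ a ∈ A, IsStrongAtomM a) : HasUniqueExponents A := by
  have hcoeff : ∀ z : M →₀ ℕ, ↑z.support ⊆ A → ∀ a ∈ A, ∀ i ∈ (τ a).toAdd.support,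
      (τ (z.prod fun a n => a ^ n)).toAdd i = z a * (τ a).toAdd i := by
    intro z hz a haA i hi
    rw [toAdd_map_prod_pow_apply, Finsupp.sum_eq_single a _ (by simp)]
    intro b hb hba
    have hib : i ∉ (τ b).toAdd.support := fun hib => hba <|
      (hA b (hz (Finsupp.mem_support_iff.2 hb))).eq_of_mem_support hdt htor hred (hA a haA) hib hi
    rw [Finsupp.notMem_support_iff.1 hib, mul_zero]
  intro x y hx hy hxy
  ext a
  by_cases haA : a ∈ A
  · obtain ⟨i, hi⟩ := Finsupp.support_nonempty_iff.2 (hdt.toAdd_map_ne_zero (hA a haA).1.1)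
    have h := hcoeff x hx a haA i hi
    rw [hxy, hcoeff y hy a haA i hi] at h
    exact Nat.eq_of_mul_eq_mul_right (Nat.pos_of_ne_zero (Finsupp.mem_support_iff.1 hi)) h.symm
  · rw [Finsupp.notMem_support_iff.1 fun h => haA (hx h),
      Finsupp.notMem_support_iff.1 fun h => haA (hy h)]

end KrullMonoid

theorem support_add_subset {α : Type*} {A : Set α} {x y : α →₀ ℕ} (hx : ↑x.support ⊆ A)
    (hy : ↑y.support ⊆ A) : ↑(x + y).support ⊆ A := by
  classical
  simpa [Finsupp.support_add_eq_union] using And.intro hx hy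

section Closure

variable {M : Type*} [CancelCommMonoid M] {A : Set M}

theorem prod_pow_add (x y : M →₀ ℕ) :
    ((x + y).prod fun a n => a ^ n) = (x.prod fun a n => a ^ n) * y.prod fun a n => a ^ n :=
  Finsupp.prod_add_index' (fun _ => pow_zero _) fun _ => pow_add _

theorem exists_finsupp_of_mem_closure {m : M} (hm : m ∈ Submonoid.closure A) :
    ∃ x : M →₀ ℕ, ↑x.support ⊆ A ∧ (x.prod fun a n => a ^ n) = m := by
  rw [← Subtype.range_coe (s := A)] at hm
  obtain ⟨x, rfl⟩ := Submonoid.exists_finsupp_of_mem_closure_range _ m hm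
  exact ⟨x.embDomain (Function.Embedding.subtype _), by simp [Finsupp.support_embDomain],
    Finsupp.prod_embDomain⟩

theorem prod_pow_mem_closure {x : M →₀ ℕ} (hx : ↑x.support ⊆ A) :
    (x.prod fun a n => a ^ n) ∈ Submonoid.closure A :=
  Submonoid.prod_mem _ fun _ hb => pow_mem (Submonoid.subset_closure (hx hb)) _

theorem exists_mem_closure_prod_pow_eq_mul {x : M →₀ ℕ} (hx : ↑x.support ⊆ A) {a : M}
    (ha : x a ≠ 0) : ∃ r ∈ Submonoid.closure A, (x.prod fun a n => a ^ n) = a * r := by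
  have hle : Finsupp.single a 1 ≤ x := Finsupp.single_le_iff.2 (Nat.one_le_iff_ne_zero.2 ha)
  refine ⟨(x - Finsupp.single a 1).prod fun a n => a ^ n,
    prod_pow_mem_closure ((Finset.coe_subset.2 Finsupp.support_tsub).trans hx), ?_⟩
  conv_lhs => rw [← add_tsub_cancel_of_le hle]
  rw [prod_pow_add, Finsupp.prod_single_index (pow_zero a), pow_one]

theorem mem_of_isPrimeInSub_closure (hred : IsReducedM M) (hA : ∀ a ∈ A, IsAtomM a) {p : M}
    (hp : IsPrimeInSub (Submonoid.closure A) p) : p ∈ A := by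
  obtain ⟨hpA, hpu, hprime⟩ := hp
  obtain ⟨x, hx, hxp⟩ := exists_finsupp_of_mem_closure hpA
  obtain ⟨a, ha⟩ := Finsupp.support_nonempty_iff (f := x) |>.2 (by rintro rfl; simp [← hxp] at hpu)
  have haA : a ∈ A := hx ha
  obtain ⟨r, hr, hpr⟩ := exists_mem_closure_prod_pow_eq_mul hx (Finsupp.mem_support_iff.1 ha)
  rw [hxp] at hpr
  rcases hprime a r (Submonoid.subset_closure haA) hr ⟨1, one_mem _, by rw [mul_one, hpr]⟩ with
    ⟨d, -, had⟩ | ⟨d, -, hrd⟩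
  · rcases (hA a haA).2 p d had with hpu' | hdu
    · exact absurd hpu' hpu
    · rwa [had, hred d hdu, mul_one] at haA
  · have had : a * d = 1 := mul_left_cancel (a := p) <| by
      rw [mul_one, mul_left_comm, ← hrd, ← hpr]
    exact absurd (IsUnit.of_mul_eq_one d had) (hA a haA).1

theorem HasUniqueExponents.isPrimeInSub_closure (hA : HasUniqueExponents A) {p : M} (hp : p ∈ A)
    (hpu : ¬IsUnit p) : IsPrimeInSub (Submonoid.closure A) p := by
  refine ⟨Submonoid.subset_closure hp, hpu, ?_⟩
  rintro b c hb hc ⟨d, hd, hbc⟩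
  obtain ⟨xb, hxb, rfl⟩ := exists_finsupp_of_mem_closure hb
  obtain ⟨xc, hxc, rfl⟩ := exists_finsupp_of_mem_closure hc
  obtain ⟨xd, hxd, rfl⟩ := exists_finsupp_of_mem_closure hd
  have hsingle : ↑(Finsupp.single p 1).support ⊆ A := by simpa using hp
  have heq : xb + xc = Finsupp.single p 1 + xd :=
    hA _ _ (support_add_subset hxb hxc) (support_add_subset hsingle hxd) <| by
      rw [prod_pow_add, prod_pow_add, Finsupp.prod_single_index (pow_zero p), pow_one, hbc]
  have hp1 : xb p + xc p = 1 + xd p := by simpa using DFunLike.congr_fun heq p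
  by_cases hbp : xb p = 0
  · exact Or.inr (exists_mem_closure_prod_pow_eq_mul hxc (by omega))
  · exact Or.inl (exists_mem_closure_prod_pow_eq_mul hxb hbp)

end Closure

/-- In a reduced Krull monoid with torsion class group, the submonoid generated by any set
`A` of strong atoms is a unique factorization monoid whose set of primes is `A`: products of
elements of `A` have unique exponents, and the primes of `⟨A⟩` are exactly the elements of `A`. -/
theorem submonoid_generated_by_strong_atoms_is_UFM
    {M ι : Type*} [CancelCommMonoid M] (τ : M →* Multiplicative (ι →₀ ℕ))
    (hdt : IsDivisorTheory τ) (htor : HasTorsionClassGroup τ) (hred : IsReducedM M)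
    (A : Set M) (hA : ∀ a ∈ A, IsStrongAtomM a) :
    (∀ x y : M →₀ ℕ, ↑x.support ⊆ A → ↑y.support ⊆ A →
      (x.prod fun a n => a ^ n) = (y.prod fun a n => a ^ n) → x = y) ∧
    {p : M | IsPrimeInSub (Submonoid.closure A) p} = A := by
  have huniq : HasUniqueExponents A := hasUniqueExponents_of_isStrongAtomM hdt htor hred hA
  exact ⟨huniq, Set.ext fun p =>
    ⟨mem_of_isPrimeInSub_closure hred fun a ha => (hA a ha).1,
      fun hp => huniq.isPrimeInSub_closure hp (hA p hp).1.1⟩⟩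
end

section
/- Let M be a reduced Krull monoid with torsion class group and let x be a nonunit of M. Suppose x^m = ∏_{a∈S(M)} a^{x_m(a)} and x^n = ∏_{a∈S(M)} a^{x_n(a)} are two decompositions of powers of x into strong atoms (with almost all exponents zero). Then x_m(a)/m = x_n(a)/n for every strong atom a. -/
/-!
Since the class group is torsion, every prime divisor `p` has a power `p ^ k` that is the divisor
of an element `e`. If `p` divides the divisor of a strong atom `a`, then `e ∣ a ^ k`, and unique
factorization of `a ^ k` forces `e` to be a power of `a`; hence the divisor of a strong atom is
a power of a single prime, and distinct strong atoms live over distinct primes. Reading off the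
`p`-coordinate of the divisors of `x ^ m` and `x ^ n` then gives `m • v_p(x) = f a • s` and
`n • v_p(x) = g a • s`, where `τ a = p ^ s`, so both ratios equal `v_p(x) / s`.
-/

open Multiplicative

section Factorization

variable {M : Type*} [CancelCommMonoid M]

theorem exists_atom_factorization_of_degree (deg : M → ℕ)
    (deg_mul : ∀ b c, deg (b * c) = deg b + deg c) (deg_pos : ∀ u, ¬IsUnit u → 0 < deg u)
    (u : M) (hu : ¬IsUnit u) : ∃ s : Multiset M, (∀ b ∈ s, IsAtomM b) ∧ s.prod = u := by
  generalize hd : deg u = d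
  induction d using Nat.strong_induction_on generalizing u with
  | _ d ih =>
    by_cases hat : IsAtomM u
    · exact ⟨{u}, by simpa using hat, Multiset.prod_singleton u⟩
    obtain ⟨b, c, rfl, hb, hc⟩ : ∃ b c, u = b * c ∧ ¬IsUnit b ∧ ¬IsUnit c := by
      simpa [IsAtomM, hu] using hat
    have := deg_pos b hb
    have := deg_pos c hc
    rw [deg_mul] at hd
    obtain ⟨sb, hsb, rfl⟩ := ih _ (by omega) b hb rfl
    obtain ⟨sc, hsc, rfl⟩ := ih _ (by omega) c hc rfl
    refine ⟨sb + sc, fun y hy => ?_, Multiset.prod_add sb sc⟩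
    exact (Multiset.mem_add.1 hy).elim (hsb y) (hsc y)

theorem IsStrongAtomM.exists_eq_pow_of_dvd_pow_s14
    (hfac : ∀ u : M, ∃ s : Multiset M, (∀ b ∈ s, IsAtomM b) ∧ s.prod = u)
    {a y : M} (ha : IsStrongAtomM a) {k : ℕ} (hk : 0 < k) (hy : y ∣ a ^ k) :
    ∃ j, y = a ^ j := by
  obtain ⟨w, hw⟩ := hy
  obtain ⟨t, ht, rfl⟩ := hfac y
  obtain ⟨r, hr, rfl⟩ := hfac w
  have hrep := ha.2 k hk (t + r) (fun b hb => (Multiset.mem_add.1 hb).elim (ht b) (hr b))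
    (by rw [Multiset.prod_add, hw])
  obtain ⟨j, rfl⟩ : ∃ j, t = Multiset.replicate j a :=
    ⟨_, Multiset.eq_replicate_card.2 fun b hb =>
      Multiset.eq_of_mem_replicate (hrep ▸ Multiset.mem_add.2 (Or.inl hb))⟩
  exact ⟨j, Multiset.prod_replicate j a⟩

theorem IsStrongAtomM.eq_of_pow_eq_pow {a b : M} (ha : IsStrongAtomM a) (hb : IsStrongAtomM b)
    {s t : ℕ} (hs : 0 < s) (ht : 0 < t) (h : b ^ s = a ^ t) : b = a := by
  have hrep := ha.2 t ht (Multiset.replicate s b)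
    (fun c hc => Multiset.eq_of_mem_replicate hc ▸ hb.1) (by rw [Multiset.prod_replicate, h])
  exact Multiset.eq_of_mem_replicate (hrep ▸ Multiset.mem_replicate.2 ⟨hs.ne', rfl⟩)

end Factorization

section DivisorTheory

variable {M ι : Type*} [CancelCommMonoid M] {τ : M →* Multiplicative (ι →₀ ℕ)}

theorem IsDivisorTheory.isUnit_iff (hdt : IsDivisorTheory τ) {u : M} : IsUnit u ↔ τ u = 1 :=
  ⟨fun h => isUnit_iff_eq_one.1 (h.map τ),
    fun h => isUnit_of_dvd_one (hdt.1 u 1 (by rw [h, map_one]))⟩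

theorem IsDivisorTheory.exists_atom_factorization (hdt : IsDivisorTheory τ)
    (hred : IsReducedM M) (u : M) : ∃ s : Multiset M, (∀ b ∈ s, IsAtomM b) ∧ s.prod = u := by
  by_cases hu : IsUnit u
  · exact ⟨0, by simp, by simp [hred u hu]⟩
  refine exists_atom_factorization_of_degree (fun y => (τ y).toAdd.degree) (by simp)
    (fun y hy => Nat.pos_of_ne_zero fun h => hy (hdt.isUnit_iff.2 ?_)) u hu
  exact toAdd.injective ((Finsupp.degree_eq_zero_iff _).1 h)

theorem HasTorsionClassGroup.exists_toAdd_eq_single (hdt : IsDivisorTheory τ)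
    (htor : HasTorsionClassGroup τ) (p : ι) :
    ∃ k, 0 < k ∧ ∃ e : M, (τ e).toAdd = Finsupp.single p k := by
  obtain ⟨k, hk, b, c, hbc⟩ := htor (ofAdd (Finsupp.single p 1))
  obtain ⟨e, rfl⟩ := hdt.1 b c ⟨_, by rw [← hbc, mul_comm]⟩
  rw [map_mul, mul_comm (τ b), mul_left_inj] at hbc
  exact ⟨k, hk, e, by simp [← hbc]⟩

theorem IsStrongAtomM.exists_toAdd_eq_single (hdt : IsDivisorTheory τ)
    (htor : HasTorsionClassGroup τ) (hred : IsReducedM M) {a : M} (ha : IsStrongAtomM a) :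
    ∃ p s, 0 < s ∧ (τ a).toAdd = Finsupp.single p s := by
  obtain ⟨p, hp⟩ : ∃ p, (τ a).toAdd p ≠ 0 := by
    by_contra! h
    exact ha.1.1 (hdt.isUnit_iff.2 (toAdd.injective (Finsupp.ext h)))
  obtain ⟨k, hk, e, he⟩ := htor.exists_toAdd_eq_single hdt p
  have hle : (τ e).toAdd ≤ (τ (a ^ k)).toAdd := by
    rw [he, map_pow, toAdd_pow, Finsupp.single_le_iff, Finsupp.smul_apply, smul_eq_mul]
    exact Nat.le_mul_of_pos_right k (Nat.pos_of_ne_zero hp)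
  have hdvd : e ∣ a ^ k :=
    hdt.1 _ _ ⟨ofAdd ((τ (a ^ k)).toAdd - (τ e).toAdd), (add_tsub_cancel_of_le hle).symm⟩
  obtain ⟨j, rfl⟩ := ha.exists_eq_pow_of_dvd_pow_s14 (hdt.exists_atom_factorization hred) hk hdvd
  rw [map_pow, toAdd_pow] at he
  have hj : j ≠ 0 := by
    rintro rfl
    simp [eq_comm, hk.ne'] at he
  have hsupp : (τ a).toAdd.support = {p} := by
    rw [← Finsupp.support_smul_eq hj, he, Finsupp.support_single _ hk.ne']
  obtain ⟨hpos, hsingle⟩ := Finsupp.support_eq_singleton.1 hsupp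
  exact ⟨p, _, Nat.pos_of_ne_zero hpos, hsingle⟩

theorem IsStrongAtomM.eq_of_toAdd_eq_single (hdt : IsDivisorTheory τ) (hred : IsReducedM M)
    {a b : M} (ha : IsStrongAtomM a) (hb : IsStrongAtomM b) {p : ι} {s t : ℕ}
    (hs : 0 < s) (ht : 0 < t) (hsa : (τ a).toAdd = Finsupp.single p s)
    (htb : (τ b).toAdd = Finsupp.single p t) : b = a :=
  ha.eq_of_pow_eq_pow hb hs ht <| hdt.injective hred <| toAdd.injective <| by
    simp only [map_pow, toAdd_pow, hsa, htb, Finsupp.smul_single, smul_eq_mul, mul_comm]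

theorem IsStrongAtomM.toAdd_map_prod_pow_apply (hdt : IsDivisorTheory τ)
    (htor : HasTorsionClassGroup τ) (hred : IsReducedM M) {a : M} (ha : IsStrongAtomM a)
    {p : ι} {s : ℕ} (hs : 0 < s) (hsa : (τ a).toAdd = Finsupp.single p s)
    {h : M →₀ ℕ} (hh : ∀ b ∈ h.support, IsStrongAtomM b) :
    (τ (h.prod fun b k => b ^ k)).toAdd p = h a * s := by
  simp only [Finsupp.prod, map_prod, toAdd_prod, map_pow, toAdd_pow, Finsupp.finsetSum_apply,
    Finsupp.smul_apply, smul_eq_mul]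
  rw [Finset.sum_eq_single a, hsa, Finsupp.single_eq_same]
  · intro b hb hba
    obtain ⟨q, t, ht, htb⟩ := (hh b hb).exists_toAdd_eq_single hdt htor hred
    rw [htb, Finsupp.single_eq_of_ne', mul_zero]
    rintro rfl
    exact hba (ha.eq_of_toAdd_eq_single hdt hred (hh b hb) hs ht hsa htb)
  · intro ha'
    rw [Finsupp.notMem_support_iff.1 ha', zero_mul]

end DivisorTheory

theorem decay_decomposition_proportionality_general
    {M ι : Type*} [CancelCommMonoid M] (τ : M →* Multiplicative (ι →₀ ℕ))
    (hdt : IsDivisorTheory τ) (htor : HasTorsionClassGroup τ) (hred : IsReducedM M)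
    (x : M) (m n : ℕ) (hm : 0 < m) (hn : 0 < n)
    (f g : M →₀ ℕ)
    (hf : ∀ a ∈ f.support, IsStrongAtomM a) (hg : ∀ a ∈ g.support, IsStrongAtomM a)
    (hfm : x ^ m = f.prod fun a k => a ^ k) (hgn : x ^ n = g.prod fun a k => a ^ k) :
    ∀ a : M, (f a : ℚ) / m = (g a : ℚ) / n := by
  intro a
  by_cases ha : IsStrongAtomM a
  · obtain ⟨p, s, hs, hsa⟩ := ha.exists_toAdd_eq_single hdt htor hred
    have hxm := congrArg (fun y => (τ y).toAdd p) hfm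
    have hxn := congrArg (fun y => (τ y).toAdd p) hgn
    simp only [map_pow, toAdd_pow, Finsupp.smul_apply, smul_eq_mul,
      ha.toAdd_map_prod_pow_apply hdt htor hred hs hsa hf,
      ha.toAdd_map_prod_pow_apply hdt htor hred hs hsa hg] at hxm hxn
    have hxm' : (m : ℚ) * (τ x).toAdd p = f a * s := by exact_mod_cast hxm
    have hxn' : (n : ℚ) * (τ x).toAdd p = g a * s := by exact_mod_cast hxn
    rw [div_eq_div_iff (by positivity) (by positivity)]
    refine mul_right_cancel₀ (by positivity : (s : ℚ) ≠ 0) ?_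
    linear_combination (m : ℚ) * hxn' - (n : ℚ) * hxm'
  · simp [Finsupp.notMem_support_iff.1 (mt (hf a) ha), Finsupp.notMem_support_iff.1 (mt (hg a) ha)]

/-- Proportionality of decay decompositions: if `x ^ m` and `x ^ n` both factor into strong
atoms with exponent functions `f` and `g`, then `f a / m = g a / n` for every strong atom `a`. -/
theorem decay_decomposition_proportionality
    {M ι : Type*} [CancelCommMonoid M] (τ : M →* Multiplicative (ι →₀ ℕ))
    (hdt : IsDivisorTheory τ) (htor : HasTorsionClassGroup τ) (hred : IsReducedM M)
    (x : M) (hx : ¬ IsUnit x) (m n : ℕ) (hm : 0 < m) (hn : 0 < n)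
    (f g : M →₀ ℕ)
    (hf : ∀ a ∈ f.support, IsStrongAtomM a) (hg : ∀ a ∈ g.support, IsStrongAtomM a)
    (hfm : x ^ m = f.prod fun a k => a ^ k) (hgn : x ^ n = g.prod fun a k => a ^ k) :
    ∀ a : M, (f a : ℚ) / m = (g a : ℚ) / n :=
  decay_decomposition_proportionality_general τ hdt htor hred x m n hm hn f g hf hg hfm hgn
end
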